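/- arXiv:math/0208047 — 6 statements merged into one kernel-verified Lean document; each statement's English description precedes it below -/
import Mathlib

section
/- Let T be a faithfully flat H-Galois object over k. Then for every x ∈ T the element S(x₍₁₎)⁽¹⁾ ⊗ (x₍₀₎·S(x₍₁₎)⁽²⁾) of T ⊗ T lies in T ⊗ k·1, i.e. it is in the image of the map T → T ⊗ T, t ↦ t ⊗ 1. -/
/-!
Write `Ψ(t ⊗ h) = S(h)⁽¹⁾ ⊗ t·S(h)⁽²⁾ = (1 ⊗ t)·γ(S h)`, so that the element in question is
`w = Ψ(ρ x)`. Since `β = (mul ⊗ id) ∘ (id ⊗ ρ)`, any `w` with `(id ⊗ ρ) w = w ⊗ 1` satisfies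
`β w = β (mul w ⊗ 1)`, hence `w = mul w ⊗ 1` by injectivity of `β`.

That `Ψ(ρ x)` has this property is a Sweedler computation. Applying the injective map `β ⊗ id`
shows that `γ` is colinear, `(id ⊗ ρ)(γ h) = γ(h₁) ⊗ h₂`; together with `Δ(S h) = S h₂ ⊗ S h₁`
and coassociativity of `ρ` this gives
`(id ⊗ ρ)(Ψ(ρ x)) = S(x₃)⁽¹⁾ ⊗ x₀ S(x₃)⁽²⁾ ⊗ x₁ S(x₂) = Ψ(ρ x) ⊗ 1`.
-/

open TensorProduct LinearMap HopfAlgebra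

namespace HopfAlgebra

variable {k H : Type*} [CommRing k] [Ring H] [HopfAlgebra k H]

open Coalgebra WithConv in
/-- `Δ` has the right convolution inverse `Δ ∘ S` (`LinearMap.comul_right_inv`); we check that
`(S ⊗ S) ∘ τ ∘ Δ` is a left inverse, so the two agree. -/
theorem comul_comp_antipode :
    comul ∘ₗ antipode k =
      map (antipode k) (antipode k) ∘ₗ (TensorProduct.comm k H H).toLinearMap ∘ₗ comul := by
  have left_inv : toConv (map (antipode k) (antipode k) ∘ₗ
      (TensorProduct.comm k H H).toLinearMap ∘ₗ comul) * toConv (comul : H →ₗ[k] H ⊗[k] H) = 1 := by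
    apply WithConv.ext
    have h : mul' k H ∘ₗ map (antipode k) LinearMap.id ∘ₗ comul =
        Algebra.linearMap k H ∘ₗ counit :=
      mul_antipode_rTensor_comul
    simp only [LinearMap.convMul_def, LinearMap.convOne_def, ofConv_toConv, mul'_tensor]
    simp only [coassoc_simps, h]
    -- move the remaining counit next to the comultiplication it follows, and cancel them
    rw [← LinearMap.id_comp (Algebra.linearMap k H), ← LinearMap.comp_id (mul' k H ∘ₗ _),
      TensorProduct.map_comp, ← TensorProduct.map_id, LinearMap.comp_assoc,
      ← LinearMap.comp_assoc _ (TensorProduct.assoc k H H H).toLinearMap,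
      TensorProduct.map_map_comp_assoc_eq]
    simp only [LinearMap.comp_assoc]
    rw [CoassocSimps.TensorProduct.map_comp_assoc, CoassocSimps.map_counit_comp_comul_left]
    ext x
    have key (w : H ⊗[k] H) : map (Algebra.linearMap k H)
        (mul' k H ∘ₗ map (antipode k) LinearMap.id ∘ₗ (TensorProduct.comm k H H).toLinearMap)
        (TensorProduct.assoc k k H H
          (map (TensorProduct.lid k H).symm.toLinearMap LinearMap.id (TensorProduct.comm k H H w)))
        = 1 ⊗ₜ mul' k H (rTensor H (antipode k) w) := by
      induction w using TensorProduct.induction_on <;> simp_all [tmul_add]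
    simp only [LinearMap.comp_apply, LinearMap.id_comp, TensorProduct.map_id, LinearEquiv.coe_coe]
    rw [key, mul_antipode_rTensor_comul_apply]
    simp [Algebra.algebraMap_eq_smul_one, Algebra.TensorProduct.one_def]
  exact congrArg ofConv (left_inv_eq_right_inv left_inv comul_right_inv).symm

theorem comul_antipode (h : H) :
    Coalgebra.comul (antipode k h) =
      map (antipode k) (antipode k) (TensorProduct.comm k H H (Coalgebra.comul h)) :=
  LinearMap.congr_fun comul_comp_antipode h

end HopfAlgebra

theorem TensorProduct.assoc_symm_tmul_eq_rTensor_mk {R M N P : Type*} [CommSemiring R]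
    [AddCommMonoid M] [AddCommMonoid N] [AddCommMonoid P] [Module R M] [Module R N] [Module R P]
    (m : M) (w : N ⊗[R] P) :
    (TensorProduct.assoc R M N P).symm (m ⊗ₜ w) = rTensor P (TensorProduct.mk R M N m) w := by
  induction w using TensorProduct.induction_on with
  | zero => simp
  | tmul n p => simp
  | add u v hu hv => simp only [tmul_add, map_add, hu, hv]

namespace HopfGalois

variable {k H T : Type*} [CommRing k] [Ring H] [HopfAlgebra k H] [Ring T] [Algebra k T]
  {ρ : T →ₐ[k] T ⊗[k] H} {β : T ⊗[k] T →ₗ[k] T ⊗[k] H} {γ : H →ₗ[k] T ⊗[k] T}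

theorem canonical_eq_rTensor_mul' (hβ : ∀ x y : T, β (x ⊗ₜ[k] y) = (x ⊗ₜ[k] (1 : H)) * ρ y)
    (w : T ⊗[k] T) :
    β w =
      rTensor H (mul' k T) ((TensorProduct.assoc k T T H).symm (lTensor T ρ.toLinearMap w)) := by
  induction w using TensorProduct.induction_on with
  | zero => simp
  | add u v hu hv => simp only [map_add, hu, hv]
  | tmul a b =>
    rw [hβ, lTensor_tmul, AlgHom.toLinearMap_apply]
    induction ρ b using TensorProduct.induction_on with
    | zero => simp
    | tmul t h => simp
    | add u v hu hv => simp only [mul_add, tmul_add, map_add, hu, hv]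

theorem rTensor_canonical_assoc_symm_tmul
    (hβ : ∀ x y : T, β (x ⊗ₜ[k] y) = (x ⊗ₜ[k] (1 : H)) * ρ y) (a : T) (u : T ⊗[k] H) :
    rTensor H β ((TensorProduct.assoc k T T H).symm (a ⊗ₜ u)) =
      ((a ⊗ₜ 1) ⊗ₜ 1) * rTensor H ρ.toLinearMap u := by
  induction u using TensorProduct.induction_on with
  | zero => simp
  | tmul t h => simp [hβ]
  | add u v hu hv => simp only [tmul_add, mul_add, map_add, hu, hv]

theorem canonical_colinear
    (hcoassoc : ∀ x : T,
      (TensorProduct.map ρ.toLinearMap LinearMap.id) (ρ x)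
        = (TensorProduct.assoc k T H H).symm
            ((TensorProduct.map LinearMap.id Coalgebra.comul) (ρ x)))
    (hβ : ∀ x y : T, β (x ⊗ₜ[k] y) = (x ⊗ₜ[k] (1 : H)) * ρ y) (w : T ⊗[k] T) :
    rTensor H β ((TensorProduct.assoc k T T H).symm (lTensor T ρ.toLinearMap w)) =
      (TensorProduct.assoc k T H H).symm (lTensor T Coalgebra.comul (β w)) := by
  induction w using TensorProduct.induction_on with
  | zero => simp
  | add u v hu hv => simp only [map_add, hu, hv]
  | tmul a b =>
    rw [lTensor_tmul, rTensor_canonical_assoc_symm_tmul hβ, AlgHom.toLinearMap_apply, rTensor,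
      hcoassoc, hβ]
    have hmul : ∀ x y : T ⊗[k] H,
        (TensorProduct.assoc k T H H).symm (lTensor T Coalgebra.comul (x * y)) =
        (TensorProduct.assoc k T H H).symm (lTensor T Coalgebra.comul x) *
          (TensorProduct.assoc k T H H).symm (lTensor T Coalgebra.comul y) :=
      map_mul ((Algebra.TensorProduct.assoc k k k T H H).symm.toAlgHom.comp
        (Algebra.TensorProduct.map (AlgHom.id k T) (Bialgebra.comulAlgHom k H)))
    rw [hmul]
    simp [lTensor, Algebra.TensorProduct.one_def]

theorem translation_colinear
    (hcoassoc : ∀ x : T,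
      (TensorProduct.map ρ.toLinearMap LinearMap.id) (ρ x)
        = (TensorProduct.assoc k T H H).symm
            ((TensorProduct.map LinearMap.id Coalgebra.comul) (ρ x)))
    (hβ : ∀ x y : T, β (x ⊗ₜ[k] y) = (x ⊗ₜ[k] (1 : H)) * ρ y) (hβbij : Function.Bijective β)
    (hγ : ∀ h : H, β (γ h) = (1 : T) ⊗ₜ[k] h) (h : H) :
    lTensor T ρ.toLinearMap (γ h) =
      TensorProduct.assoc k T T H (rTensor H γ (Coalgebra.comul h)) := by
  have hinj : Function.Injective (rTensor H β ∘ (TensorProduct.assoc k T T H).symm) :=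
    ((LinearEquiv.ofBijective β hβbij).rTensor H).injective.comp
      (TensorProduct.assoc k T T H).symm.injective
  have hβγ : β ∘ₗ γ = TensorProduct.mk k T H 1 := LinearMap.ext hγ
  apply hinj
  simp only [Function.comp_apply, LinearEquiv.symm_apply_apply]
  rw [canonical_colinear hcoassoc hβ, hγ, lTensor_tmul, ← rTensor_comp_apply, hβγ,
    assoc_symm_tmul_eq_rTensor_mk]

theorem eq_mul'_tmul_one_of_coinvariant
    (hβ : ∀ x y : T, β (x ⊗ₜ[k] y) = (x ⊗ₜ[k] (1 : H)) * ρ y) (hβbij : Function.Bijective β)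
    {w : T ⊗[k] T}
    (hw : lTensor T ρ.toLinearMap w = TensorProduct.assoc k T T H (w ⊗ₜ 1)) :
    w = mul' k T w ⊗ₜ 1 := by
  apply hβbij.injective
  rw [canonical_eq_rTensor_mul' hβ, hw, LinearEquiv.symm_apply_apply, rTensor_tmul, hβ, map_one,
    mul_one]

variable (ρ γ) in
/-- The map `Ψ` above, written so that `twistedTranslation γ (ρ x)` is literally the element of
the statement. -/
noncomputable def twistedTranslation : T ⊗[k] H →ₗ[k] T ⊗[k] T :=
  lTensor T (mul' k T) ∘ₗ (TensorProduct.assoc k T T T).toLinearMap ∘ₗ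
    rTensor T (TensorProduct.comm k T T).toLinearMap ∘ₗ
    (TensorProduct.assoc k T T T).symm.toLinearMap ∘ₗ lTensor T (γ ∘ₗ antipode k)

theorem twistedTranslation_tmul (t : T) (h : H) :
    twistedTranslation γ (t ⊗ₜ h) = (1 ⊗ₜ t) * γ (antipode k h) := by
  simp only [twistedTranslation, comp_apply, lTensor_tmul, LinearEquiv.coe_coe]
  induction γ (antipode k h) using TensorProduct.induction_on with
  | zero => simp
  | tmul a b => simp
  | add u v hu hv => simp only [tmul_add, mul_add, map_add, hu, hv]

variable (ρ γ) in
noncomputable def coactedTranslation : (T ⊗[k] H) ⊗[k] H →ₗ[k] T ⊗[k] (T ⊗[k] H) :=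
  mul' k (T ⊗[k] (T ⊗[k] H)) ∘ₗ
    map Algebra.TensorProduct.includeRight.toLinearMap (lTensor T ρ.toLinearMap ∘ₗ γ ∘ₗ antipode k)

theorem coactedTranslation_tmul (u : T ⊗[k] H) (h : H) :
    coactedTranslation ρ γ (u ⊗ₜ h) = (1 ⊗ₜ u) * lTensor T ρ.toLinearMap (γ (antipode k h)) :=
  rfl

theorem lTensor_twistedTranslation (u : T ⊗[k] H) :
    lTensor T ρ.toLinearMap (twistedTranslation γ u) =
      coactedTranslation ρ γ (rTensor H ρ.toLinearMap u) := by
  induction u using TensorProduct.induction_on with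
  | zero => simp
  | add u v hu hv => simp only [map_add, hu, hv]
  | tmul t h =>
    rw [twistedTranslation_tmul, rTensor_tmul, coactedTranslation_tmul]
    exact map_mul (Algebra.TensorProduct.map (AlgHom.id k T) ρ) _ _

theorem coactedTranslation_assoc_symm_tmul (t : T) (w : H ⊗[k] H) :
    coactedTranslation ρ γ ((TensorProduct.assoc k T H H).symm (t ⊗ₜ w)) =
      (1 ⊗ₜ (t ⊗ₜ 1)) * coactedTranslation ρ γ ((TensorProduct.assoc k T H H).symm (1 ⊗ₜ w)) := by
  induction w using TensorProduct.induction_on with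
  | zero => simp
  | add u v hu hv => simp only [tmul_add, mul_add, map_add, hu, hv]
  | tmul a b =>
    simp only [TensorProduct.assoc_symm_tmul, coactedTranslation_tmul, ← mul_assoc,
      Algebra.TensorProduct.tmul_mul_tmul, mul_one, one_mul]

theorem coactedTranslation_comul
    (hcoassoc : ∀ x : T,
      (TensorProduct.map ρ.toLinearMap LinearMap.id) (ρ x)
        = (TensorProduct.assoc k T H H).symm
            ((TensorProduct.map LinearMap.id Coalgebra.comul) (ρ x)))
    (hβ : ∀ x y : T, β (x ⊗ₜ[k] y) = (x ⊗ₜ[k] (1 : H)) * ρ y) (hβbij : Function.Bijective β)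
    (hγ : ∀ h : H, β (γ h) = (1 : T) ⊗ₜ[k] h) (h : H) :
    coactedTranslation ρ γ ((TensorProduct.assoc k T H H).symm (1 ⊗ₜ Coalgebra.comul h)) =
      TensorProduct.assoc k T T H (γ (antipode k h) ⊗ₜ 1) := by
  set F : H ⊗[k] H →ₗ[k] H := mul' k H ∘ₗ lTensor H (antipode k)
  set G : H →ₗ[k] T ⊗[k] T := γ ∘ₗ antipode k
  have hF : F ∘ₗ Coalgebra.comul = Algebra.linearMap k H ∘ₗ Coalgebra.counit :=
    mul_antipode_lTensor_comul
  have expand (w : H ⊗[k] H) :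
      coactedTranslation ρ γ ((TensorProduct.assoc k T H H).symm (1 ⊗ₜ w)) =
        TensorProduct.assoc k T T H (TensorProduct.comm k H (T ⊗[k] T)
          (map F G ((TensorProduct.assoc k H H H).symm (lTensor H Coalgebra.comul w)))) := by
    induction w using TensorProduct.induction_on with
    | zero => simp
    | add u v hu hv => simp only [tmul_add, map_add, hu, hv]
    | tmul a b =>
      have mul_left (z : H ⊗[k] H) :
          Algebra.TensorProduct.assoc k k k T T H (((1 ⊗ₜ 1) ⊗ₜ a) *
            rTensor H γ (map (antipode k) (antipode k) (TensorProduct.comm k H H z))) =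
          TensorProduct.assoc k T T H (TensorProduct.comm k H (T ⊗[k] T)
            (map F G ((TensorProduct.assoc k H H H).symm (a ⊗ₜ z)))) := by
        induction z using TensorProduct.induction_on with
        | zero => simp
        | add u v hu hv => simp only [tmul_add, mul_add, map_add, hu, hv]
        | tmul b₁ b₂ =>
          simp [F, G, ← Algebra.TensorProduct.one_def]
          rfl
      rw [TensorProduct.assoc_symm_tmul, coactedTranslation_tmul,
        translation_colinear hcoassoc hβ hβbij hγ, comul_antipode, lTensor_tmul, ← mul_left]
      exact (map_mul (Algebra.TensorProduct.assoc k k k T T H) ((1 ⊗ₜ 1) ⊗ₜ a) _).symm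
  calc _ = TensorProduct.assoc k T T H (TensorProduct.comm k H (T ⊗[k] T)
          (map F G (rTensor H Coalgebra.comul (Coalgebra.comul h)))) := by
        rw [expand, Coalgebra.coassoc_symm_apply]
    _ = TensorProduct.assoc k T T H (TensorProduct.comm k H (T ⊗[k] T)
          (map (Algebra.linearMap k H) G (rTensor H Coalgebra.counit (Coalgebra.comul h)))) := by
        rw [map_rTensor, map_rTensor, hF]
    _ = _ := by
        rw [Coalgebra.rTensor_counit_comul]
        simp [G]

theorem lTensor_twistedTranslation_coaction
    (hcoassoc : ∀ x : T,
      (TensorProduct.map ρ.toLinearMap LinearMap.id) (ρ x)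
        = (TensorProduct.assoc k T H H).symm
            ((TensorProduct.map LinearMap.id Coalgebra.comul) (ρ x)))
    (hβ : ∀ x y : T, β (x ⊗ₜ[k] y) = (x ⊗ₜ[k] (1 : H)) * ρ y) (hβbij : Function.Bijective β)
    (hγ : ∀ h : H, β (γ h) = (1 : T) ⊗ₜ[k] h) (x : T) :
    lTensor T ρ.toLinearMap (twistedTranslation γ (ρ x)) =
      TensorProduct.assoc k T T H (twistedTranslation γ (ρ x) ⊗ₜ 1) := by
  have key (u : T ⊗[k] H) :
      coactedTranslation ρ γ ((TensorProduct.assoc k T H H).symm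
        (map LinearMap.id Coalgebra.comul u)) =
      TensorProduct.assoc k T T H (twistedTranslation γ u ⊗ₜ 1) := by
    induction u using TensorProduct.induction_on with
    | zero => simp
    | add u v hu hv => simp only [map_add, add_tmul, hu, hv]
    | tmul t h =>
      rw [map_tmul, LinearMap.id_apply, coactedTranslation_assoc_symm_tmul,
        coactedTranslation_comul hcoassoc hβ hβbij hγ, twistedTranslation_tmul,
        ← mul_one (1 : H), ← Algebra.TensorProduct.tmul_mul_tmul, mul_one]
      exact (map_mul (Algebra.TensorProduct.assoc k k k T T H) ((1 ⊗ₜ t) ⊗ₜ 1)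
        (γ (antipode k h) ⊗ₜ 1)).symm
  rw [lTensor_twistedTranslation, rTensor, hcoassoc, key]

end HopfGalois

theorem stmt_0_general
    {k : Type*} [CommRing k] {H : Type*} [Ring H] [HopfAlgebra k H]
    {T : Type*} [Ring T] [Algebra k T]
    -- `ρ` is an algebra map making `T` a right `H`-comodule algebra:
    (ρ : T →ₐ[k] T ⊗[k] H)
    (hcoassoc : ∀ x : T,
      (TensorProduct.map ρ.toLinearMap LinearMap.id) (ρ x)
        = (TensorProduct.assoc k T H H).symm
            ((TensorProduct.map LinearMap.id Coalgebra.comul) (ρ x)))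
    -- the canonical (Galois) map `β(x ⊗ y) = x·y₍₀₎ ⊗ y₍₁₎`, assumed bijective:
    (β : T ⊗[k] T →ₗ[k] T ⊗[k] H)
    (hβ : ∀ x y : T, β (x ⊗ₜ[k] y) = (x ⊗ₜ[k] (1 : H)) * ρ y)
    (hβbij : Function.Bijective β)
    -- `γ(h) = β⁻¹(1 ⊗ h) = h⁽¹⁾ ⊗ h⁽²⁾`:
    (γ : H →ₗ[k] T ⊗[k] T)
    (hγ : ∀ h : H, β (γ h) = (1 : T) ⊗ₜ[k] h)
    :
    ∀ x : T,
      (LinearMap.lTensor T (LinearMap.mul' k T))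
        ((TensorProduct.assoc k T T T)
          ((LinearMap.rTensor T (TensorProduct.comm k T T).toLinearMap)
            ((TensorProduct.assoc k T T T).symm
              ((LinearMap.lTensor T (γ ∘ₗ HopfAlgebra.antipode (R := k))) (ρ x)))))
        ∈ Set.range (fun t : T => t ⊗ₜ[k] (1 : T)) := by
  intro x
  exact ⟨_, (HopfGalois.eq_mul'_tmul_one_of_coinvariant hβ hβbij
    (HopfGalois.lTensor_twistedTranslation_coaction hcoassoc hβ hβbij hγ x)).symm⟩

/-- For a faithfully flat `H`-Galois object `T`, the element
`S(x₍₁₎)⁽¹⁾ ⊗ (x₍₀₎·S(x₍₁₎)⁽²⁾)` of `T ⊗ T` lies in `T ⊗ k·1`, i.e. it is in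
the image of `t ↦ t ⊗ 1`. -/
theorem stmt_0
    {k : Type*} [CommRing k] {H : Type*} [Ring H] [HopfAlgebra k H]
    {T : Type*} [Ring T] [Algebra k T]
    -- `ρ` is an algebra map making `T` a right `H`-comodule algebra:
    (ρ : T →ₐ[k] T ⊗[k] H)
    (hcoassoc : ∀ x : T,
      (TensorProduct.map ρ.toLinearMap LinearMap.id) (ρ x)
        = (TensorProduct.assoc k T H H).symm
            ((TensorProduct.map LinearMap.id Coalgebra.comul) (ρ x)))
    (hcounit : ∀ x : T,
      (TensorProduct.rid k T)
        ((TensorProduct.map LinearMap.id Coalgebra.counit) (ρ x)) = x)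
    -- the coinvariants are exactly `k·1`:
    (hcoinv : {t : T | ρ t = t ⊗ₜ[k] (1 : H)} = Set.range (algebraMap k T))
    -- `T` is faithfully flat over `k`:
    (hflat : Module.FaithfullyFlat k T)
    -- the canonical (Galois) map `β(x ⊗ y) = x·y₍₀₎ ⊗ y₍₁₎`, assumed bijective:
    (β : T ⊗[k] T →ₗ[k] T ⊗[k] H)
    (hβ : ∀ x y : T, β (x ⊗ₜ[k] y) = (x ⊗ₜ[k] (1 : H)) * ρ y)
    (hβbij : Function.Bijective β)
    -- `γ(h) = β⁻¹(1 ⊗ h) = h⁽¹⁾ ⊗ h⁽²⁾`: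
    (γ : H →ₗ[k] T ⊗[k] T)
    (hγ : ∀ h : H, β (γ h) = (1 : T) ⊗ₜ[k] h)
    :
    ∀ x : T,
      (LinearMap.lTensor T (LinearMap.mul' k T))
        ((TensorProduct.assoc k T T T)
          ((LinearMap.rTensor T (TensorProduct.comm k T T).toLinearMap)
            ((TensorProduct.assoc k T T T).symm
              ((LinearMap.lTensor T (γ ∘ₗ HopfAlgebra.antipode (R := k))) (ρ x)))))
        ∈ Set.range (fun t : T => t ⊗ₜ[k] (1 : T)) :=
  stmt_0_general ρ hcoassoc β hβ hβbij γ hγ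
end

section
/- Let T be a faithfully flat H-Galois object over k. Then μ : T → T ⊗ T ⊗ T is a unital algebra homomorphism when the middle tensor factor carries the opposite multiplication: μ(1) = 1 ⊗ 1 ⊗ 1, and writing μ(x) = x⁽¹⁾ ⊗ x⁽²⁾ ⊗ x⁽³⁾, one has μ(x·y) = x⁽¹⁾y⁽¹⁾ ⊗ y⁽²⁾x⁽²⁾ ⊗ x⁽³⁾y⁽³⁾ for all x, y ∈ T. -/
open TensorProduct LinearMap

/-!
Writing `γ(h) = h⁽¹⁾ ⊗ h⁽²⁾`, the translation map `δ(h) = op h⁽¹⁾ ⊗ h⁽²⁾ : H → Tᵐᵒᵖ ⊗ T` is an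
algebra homomorphism: transporting the Galois map `β` to `Tᵐᵒᵖ ⊗ T`, one computes
`β(δ g · δ h) = (1 ⊗ g)(1 ⊗ h) = β(δ(g h))`, and `β` is injective. Then
`μ = (id ⊗ δ) ∘ ρ` (with the middle factor read in `Tᵐᵒᵖ`) is a composite of algebra maps.
-/

namespace GaloisObject

variable {k T H : Type*} [CommSemiring k] [Semiring T] [Algebra k T] [Semiring H] [Algebra k H]

variable (k T) in
noncomputable abbrev opTensor : T ⊗[k] T ≃ₗ[k] Tᵐᵒᵖ ⊗[k] T :=
  TensorProduct.congr (MulOpposite.opLinearEquiv k) (LinearEquiv.refl k T)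

section Canonical

variable (ρ : T →ₐ[k] T ⊗[k] H) (β : T ⊗[k] T →ₗ[k] T ⊗[k] H)
  (hβ : ∀ x y : T, β (x ⊗ₜ[k] y) = (x ⊗ₜ[k] (1 : H)) * ρ y)
include hβ

theorem canonical_opTensor_symm_tmul (c : Tᵐᵒᵖ) (d : T) :
    β ((opTensor k T).symm (c ⊗ₜ[k] d)) = (c.unop ⊗ₜ[k] (1 : H)) * ρ d := by
  simp [hβ]

theorem canonical_opTensor_symm_mul_tmul (u : Tᵐᵒᵖ ⊗[k] T) (c : Tᵐᵒᵖ) (d : T) :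
    β ((opTensor k T).symm (u * (c ⊗ₜ[k] d)))
      = (c.unop ⊗ₜ[k] (1 : H)) * β ((opTensor k T).symm u) * ρ d := by
  induction u using TensorProduct.induction_on with
  | zero => simp
  | tmul a b =>
    rw [Algebra.TensorProduct.tmul_mul_tmul, canonical_opTensor_symm_tmul ρ β hβ,
      canonical_opTensor_symm_tmul ρ β hβ, MulOpposite.unop_mul, map_mul, ← mul_one (1 : H),
      ← Algebra.TensorProduct.tmul_mul_tmul, mul_one]
    simp only [mul_assoc]
  | add u v hu hv => simp only [add_mul, map_add, hu, hv, mul_add]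

/-- This works because `c ⊗ 1` commutes with `1 ⊗ g` in `T ⊗ H`. -/
theorem canonical_opTensor_symm_mul {u : Tᵐᵒᵖ ⊗[k] T} {g : H}
    (hu : β ((opTensor k T).symm u) = (1 : T) ⊗ₜ[k] g) (v : Tᵐᵒᵖ ⊗[k] T) :
    β ((opTensor k T).symm (u * v)) = ((1 : T) ⊗ₜ[k] g) * β ((opTensor k T).symm v) := by
  induction v using TensorProduct.induction_on with
  | zero => simp
  | tmul c d =>
    have hcomm : Commute (c.unop ⊗ₜ[k] (1 : H)) ((1 : T) ⊗ₜ[k] g) := by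
      simp [Commute, SemiconjBy, Algebra.TensorProduct.tmul_mul_tmul]
    rw [canonical_opTensor_symm_mul_tmul ρ β hβ, hu, hcomm.eq,
      canonical_opTensor_symm_tmul ρ β hβ, mul_assoc]
  | add v w hv hw => simp only [mul_add, map_add, hv, hw]

variable {γ : H →ₗ[k] T ⊗[k] T} (hβinj : Function.Injective β)
  (hγ : ∀ h : H, β (γ h) = (1 : T) ⊗ₜ[k] h)
include hβinj hγ

theorem translation_opTensor_mul (g h : H) :
    opTensor k T (γ (g * h)) = opTensor k T (γ g) * opTensor k T (γ h) := by
  have hδ (h : H) : β ((opTensor k T).symm (opTensor k T (γ h))) = (1 : T) ⊗ₜ[k] h := by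
    rw [LinearEquiv.symm_apply_apply, hγ]
  refine (opTensor k T).symm.injective (hβinj ?_)
  rw [hδ, canonical_opTensor_symm_mul ρ β hβ (hδ g), hδ, Algebra.TensorProduct.tmul_mul_tmul,
    one_mul]

theorem translation_opTensor_one : opTensor k T (γ 1) = 1 := by
  refine (opTensor k T).symm.injective (hβinj ?_)
  rw [LinearEquiv.symm_apply_apply, hγ, Algebra.TensorProduct.one_def,
    canonical_opTensor_symm_tmul ρ β hβ]
  simp

/-- `h ↦ op h⁽¹⁾ ⊗ h⁽²⁾`. -/
noncomputable def translationAlgHom : H →ₐ[k] Tᵐᵒᵖ ⊗[k] T :=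
  AlgHom.ofLinearMap ((opTensor k T).toLinearMap ∘ₗ γ)
    (translation_opTensor_one ρ β hβ hβinj hγ) (translation_opTensor_mul ρ β hβ hβinj hγ)

theorem lTensor_opTensor_comp_translation :
    lTensor T ((opTensor k T).toLinearMap ∘ₗ γ)
      = (Algebra.TensorProduct.map (AlgHom.id k T)
          (translationAlgHom ρ β hβ hβinj hγ)).toLinearMap := by
  ext t h
  rfl

end Canonical

end GaloisObject

open GaloisObject in
theorem stmt_2_general
    {k : Type*} [CommRing k] {H : Type*} [Ring H] [HopfAlgebra k H]
    {T : Type*} [Ring T] [Algebra k T]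
    -- `ρ` is an algebra map making `T` a right `H`-comodule algebra:
    (ρ : T →ₐ[k] T ⊗[k] H)
    -- the canonical (Galois) map `β(x ⊗ y) = x·y₍₀₎ ⊗ y₍₁₎`, assumed bijective:
    (β : T ⊗[k] T →ₗ[k] T ⊗[k] H)
    (hβ : ∀ x y : T, β (x ⊗ₜ[k] y) = (x ⊗ₜ[k] (1 : H)) * ρ y)
    (hβbij : Function.Bijective β)
    -- `γ(h) = β⁻¹(1 ⊗ h) = h⁽¹⁾ ⊗ h⁽²⁾`:
    (γ : H →ₗ[k] T ⊗[k] T)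
    (hγ : ∀ h : H, β (γ h) = (1 : T) ⊗ₜ[k] h)
    -- `μ(x) = x₍₀₎ ⊗ x₍₁₎⁽¹⁾ ⊗ x₍₁₎⁽²⁾`:
    (μ : T →ₗ[k] T ⊗[k] (T ⊗[k] T))
    (hμ : μ = (LinearMap.lTensor T γ) ∘ₗ ρ.toLinearMap)
    -- `j` is `μ` with the middle tensorand regarded in the opposite algebra `Tᵐᵒᵖ`:
    (j : T →ₗ[k] T ⊗[k] (Tᵐᵒᵖ ⊗[k] T))
    (hj : j = (LinearMap.lTensor T
        (TensorProduct.map (MulOpposite.opLinearEquiv k : T ≃ₗ[k] Tᵐᵒᵖ).toLinearMap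
          (LinearMap.id : T →ₗ[k] T))) ∘ₗ μ) :
    j 1 = 1 ∧ ∀ x y : T, j (x * y) = j x * j y := by
  let J : T →ₐ[k] T ⊗[k] (Tᵐᵒᵖ ⊗[k] T) :=
    (Algebra.TensorProduct.map (AlgHom.id k T)
      (translationAlgHom ρ β hβ hβbij.injective hγ)).comp ρ
  have hjJ : j = J.toLinearMap := by
    rw [hj, hμ, ← LinearMap.comp_assoc, ← lTensor_comp]
    exact congrArg (· ∘ₗ ρ.toLinearMap)
      (lTensor_opTensor_comp_translation ρ β hβ hβbij.injective hγ)
  rw [hjJ]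
  exact ⟨J.map_one, J.map_mul⟩

/-- For a faithfully flat `H`-Galois object `T`, the map
`μ(x) = x₍₀₎ ⊗ x₍₁₎⁽¹⁾ ⊗ x₍₁₎⁽²⁾` is a unital algebra homomorphism
`T → T ⊗ Tᵒᵖ ⊗ T` (middle factor with opposite multiplication):
`μ(1) = 1 ⊗ 1 ⊗ 1` and `μ(x·y) = x⁽¹⁾y⁽¹⁾ ⊗ y⁽²⁾x⁽²⁾ ⊗ x⁽³⁾y⁽³⁾`. -/
theorem stmt_2
    {k : Type*} [CommRing k] {H : Type*} [Ring H] [HopfAlgebra k H]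
    {T : Type*} [Ring T] [Algebra k T]
    -- `ρ` is an algebra map making `T` a right `H`-comodule algebra:
    (ρ : T →ₐ[k] T ⊗[k] H)
    (hcoassoc : ∀ x : T,
      (TensorProduct.map ρ.toLinearMap LinearMap.id) (ρ x)
        = (TensorProduct.assoc k T H H).symm
            ((TensorProduct.map LinearMap.id Coalgebra.comul) (ρ x)))
    (hcounit : ∀ x : T,
      (TensorProduct.rid k T)
        ((TensorProduct.map LinearMap.id Coalgebra.counit) (ρ x)) = x)
    -- the coinvariants are exactly `k·1`:
    (hcoinv : {t : T | ρ t = t ⊗ₜ[k] (1 : H)} = Set.range (algebraMap k T))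
    -- `T` is faithfully flat over `k`:
    (hflat : Module.FaithfullyFlat k T)
    -- the canonical (Galois) map `β(x ⊗ y) = x·y₍₀₎ ⊗ y₍₁₎`, assumed bijective:
    (β : T ⊗[k] T →ₗ[k] T ⊗[k] H)
    (hβ : ∀ x y : T, β (x ⊗ₜ[k] y) = (x ⊗ₜ[k] (1 : H)) * ρ y)
    (hβbij : Function.Bijective β)
    -- `γ(h) = β⁻¹(1 ⊗ h) = h⁽¹⁾ ⊗ h⁽²⁾`:
    (γ : H →ₗ[k] T ⊗[k] T)
    (hγ : ∀ h : H, β (γ h) = (1 : T) ⊗ₜ[k] h)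
    -- `μ(x) = x₍₀₎ ⊗ x₍₁₎⁽¹⁾ ⊗ x₍₁₎⁽²⁾`:
    (μ : T →ₗ[k] T ⊗[k] (T ⊗[k] T))
    (hμ : μ = (LinearMap.lTensor T γ) ∘ₗ ρ.toLinearMap)
    -- `j` is `μ` with the middle tensorand regarded in the opposite algebra `Tᵐᵒᵖ`:
    (j : T →ₗ[k] T ⊗[k] (Tᵐᵒᵖ ⊗[k] T))
    (hj : j = (LinearMap.lTensor T
        (TensorProduct.map (MulOpposite.opLinearEquiv k : T ≃ₗ[k] Tᵐᵒᵖ).toLinearMap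
          (LinearMap.id : T →ₗ[k] T))) ∘ₗ μ) :
    j 1 = 1 ∧ ∀ x y : T, j (x * y) = j x * j y :=
  stmt_2_general ρ β hβ hβbij γ hγ μ hμ j hj
end

section
/- Let T be a faithfully flat H-Galois object over k. Then the map μ satisfies the first torsor axiom: (id_T ⊗ ∇)(μ(x)) = x ⊗ 1 for all x ∈ T, where ∇ : T ⊗ T → T is the multiplication of T. -/
open TensorProduct LinearMap HopfAlgebra

/-!
Multiplication `T ⊗ T → T` factors as `(id ⊗ ε) ∘ β`, because `id ⊗ ε` is left `T`-linear and
`(id ⊗ ε) ∘ ρ = id`. Hence `∇ ∘ γ = ε(·) 1`, since `β (γ h) = 1 ⊗ h`, and applying `id ⊗ ∇` to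
`μ(x) = x₍₀₎ ⊗ γ(x₍₁₎)` gives `x₍₀₎ ε(x₍₁₎) ⊗ 1 = x ⊗ 1`.
-/

section GaloisObject

variable {k : Type*} [CommRing k] {T H : Type*} [Ring T] [Algebra k T] [Ring H] [Algebra k H]

theorem rid_map_id_tmul_one_mul (f : H →ₗ[k] k) (x : T) (z : T ⊗[k] H) :
    TensorProduct.rid k T (map id f ((x ⊗ₜ[k] (1 : H)) * z))
      = x * TensorProduct.rid k T (map id f z) := by
  induction z using TensorProduct.induction_on with
  | zero => simp
  | tmul a h => simp [Algebra.TensorProduct.tmul_mul_tmul]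
  | add u v hu hv => simp [mul_add, hu, hv]

theorem lTensor_algebraLinearMap_apply (M : Type*) [AddCommGroup M] [Module k M]
    (w : M ⊗[k] k) :
    lTensor M (Algebra.linearMap k T) w = TensorProduct.rid k M w ⊗ₜ[k] (1 : T) := by
  induction w using TensorProduct.induction_on with
  | zero => simp
  | tmul m c => simp [Algebra.algebraMap_eq_smul_one, TensorProduct.tmul_smul, smul_tmul]
  | add u v hu hv => simp [hu, hv, add_tmul]

variable [Coalgebra k H] {ρ : T → T ⊗[k] H} {β : T ⊗[k] T →ₗ[k] T ⊗[k] H}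

theorem mul'_eq_rid_comp_map_counit_comp
    (hcounit : ∀ x : T, TensorProduct.rid k T (map id Coalgebra.counit (ρ x)) = x)
    (hβ : ∀ x y : T, β (x ⊗ₜ[k] y) = (x ⊗ₜ[k] (1 : H)) * ρ y) :
    mul' k T = (TensorProduct.rid k T).toLinearMap ∘ₗ map id Coalgebra.counit ∘ₗ β := by
  ext a b
  simp only [AlgebraTensorModule.curry_apply, curry_apply, coe_restrictScalars, mul'_apply,
    comp_apply, LinearEquiv.coe_coe, hβ, rid_map_id_tmul_one_mul, hcounit]

theorem mul'_comp_eq_algebraLinearMap_comp_counit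
    (hcounit : ∀ x : T, TensorProduct.rid k T (map id Coalgebra.counit (ρ x)) = x)
    (hβ : ∀ x y : T, β (x ⊗ₜ[k] y) = (x ⊗ₜ[k] (1 : H)) * ρ y)
    {γ : H →ₗ[k] T ⊗[k] T} (hγ : ∀ h : H, β (γ h) = (1 : T) ⊗ₜ[k] h) :
    mul' k T ∘ₗ γ = Algebra.linearMap k T ∘ₗ Coalgebra.counit := by
  ext h
  rw [mul'_eq_rid_comp_map_counit_comp hcounit hβ]
  simp [hγ, Algebra.algebraMap_eq_smul_one]

end GaloisObject

theorem stmt_3_general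
    {k : Type} [CommRing k] {H : Type} [Ring H] [HopfAlgebra k H]
    {T : Type} [Ring T] [Algebra k T]
    -- `ρ` is an algebra map making `T` a right `H`-comodule algebra:
    (ρ : T →ₐ[k] T ⊗[k] H)
    (hcounit : ∀ x : T,
      (TensorProduct.rid k T)
        ((TensorProduct.map LinearMap.id Coalgebra.counit) (ρ x)) = x)
    -- the canonical (Galois) map `β`, assumed bijective:
    (β : T ⊗[k] T →ₗ[k] T ⊗[k] H)
    (hβ : ∀ x y : T, β (x ⊗ₜ[k] y) = (x ⊗ₜ[k] (1 : H)) * ρ y)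
    -- `γ(h) = β⁻¹(1 ⊗ h) = h⁽¹⁾ ⊗ h⁽²⁾`:
    (γ : H →ₗ[k] T ⊗[k] T)
    (hγ : ∀ h : H, β (γ h) = (1 : T) ⊗ₜ[k] h)
    -- `μ(x) = x₍₀₎ ⊗ x₍₁₎⁽¹⁾ ⊗ x₍₁₎⁽²⁾`:
    (μ : T →ₗ[k] T ⊗[k] (T ⊗[k] T))
    (hμ : μ = (LinearMap.lTensor T γ) ∘ₗ ρ.toLinearMap) :
    ∀ x : T, (LinearMap.lTensor T (LinearMap.mul' k T)) (μ x) = x ⊗ₜ[k] (1 : T) := by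
  intro x
  rw [hμ, comp_apply, ← comp_apply (lTensor T _), ← lTensor_comp,
    mul'_comp_eq_algebraLinearMap_comp_counit hcounit hβ hγ, lTensor_comp, comp_apply,
    lTensor_algebraLinearMap_apply]
  exact congrArg (· ⊗ₜ[k] (1 : T)) (hcounit x)

/-- For a faithfully flat `H`-Galois object `T`, the map
`μ(x) = x₍₀₎ ⊗ x₍₁₎⁽¹⁾ ⊗ x₍₁₎⁽²⁾` satisfies the first torsor axiom
`(id_T ⊗ ∇)(μ(x)) = x ⊗ 1`. -/
theorem stmt_3
    {k : Type} [CommRing k] {H : Type} [Ring H] [HopfAlgebra k H]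
    {T : Type} [Ring T] [Algebra k T]
    -- `ρ` is an algebra map making `T` a right `H`-comodule algebra:
    (ρ : T →ₐ[k] T ⊗[k] H)
    (hcoassoc : ∀ x : T,
      (TensorProduct.map ρ.toLinearMap LinearMap.id) (ρ x)
        = (TensorProduct.assoc k T H H).symm
            ((TensorProduct.map LinearMap.id Coalgebra.comul) (ρ x)))
    (hcounit : ∀ x : T,
      (TensorProduct.rid k T)
        ((TensorProduct.map LinearMap.id Coalgebra.counit) (ρ x)) = x)
    -- the coinvariants are exactly `k·1`:
    (hcoinv : {t : T | ρ t = t ⊗ₜ[k] (1 : H)} = Set.range (algebraMap k T))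
    -- `T` is faithfully flat over `k`:
    (hflat : Module.FaithfullyFlat k T)
    -- the canonical (Galois) map `β`, assumed bijective:
    (β : T ⊗[k] T →ₗ[k] T ⊗[k] H)
    (hβ : ∀ x y : T, β (x ⊗ₜ[k] y) = (x ⊗ₜ[k] (1 : H)) * ρ y)
    (hβbij : Function.Bijective β)
    -- `γ(h) = β⁻¹(1 ⊗ h) = h⁽¹⁾ ⊗ h⁽²⁾`:
    (γ : H →ₗ[k] T ⊗[k] T)
    (hγ : ∀ h : H, β (γ h) = (1 : T) ⊗ₜ[k] h)
    -- `μ(x) = x₍₀₎ ⊗ x₍₁₎⁽¹⁾ ⊗ x₍₁₎⁽²⁾`: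
    (μ : T →ₗ[k] T ⊗[k] (T ⊗[k] T))
    (hμ : μ = (LinearMap.lTensor T γ) ∘ₗ ρ.toLinearMap) :
    ∀ x : T, (LinearMap.lTensor T (LinearMap.mul' k T)) (μ x) = x ⊗ₜ[k] (1 : T) :=
  stmt_3_general ρ hcounit β hβ γ hγ μ hμ
end

section
/- Let T be a faithfully flat H-Galois object over k. Then the map μ satisfies the second torsor axiom: (∇ ⊗ id_T)(μ(x)) = 1 ⊗ x for all x ∈ T, where ∇ : T ⊗ T → T is the multiplication of T. -/
/-!
Since the Galois map `β` is injective, it suffices to check the identity after applying `β`.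
`β` is left `T`-linear, `β (t ⊗ 1 · z) = (t ⊗ 1) · β z`, and `β ∘ γ = 1 ⊗ –`, so `β` turns
`x ↦ x₍₀₎ x₍₁₎⁽¹⁾ ⊗ x₍₁₎⁽²⁾` into `x ↦ x₍₀₎ ⊗ x₍₁₎ = ρ x = β (1 ⊗ x)`.
-/

open TensorProduct LinearMap HopfAlgebra

section GaloisMap

variable {k : Type*} [CommSemiring k] {T : Type*} [Semiring T] [Algebra k T]
  {H : Type*} [Semiring H] [Algebra k H]

theorem rTensor_mul'_assoc_symm_tmul (t : T) (z : T ⊗[k] T) :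
    rTensor T (mul' k T) ((TensorProduct.assoc k T T T).symm (t ⊗ₜ z)) = (t ⊗ₜ 1) * z := by
  induction z using TensorProduct.induction_on with
  | zero => simp only [tmul_zero, map_zero, mul_zero]
  | tmul a b =>
    rw [Algebra.TensorProduct.tmul_mul_tmul, one_mul]
    rfl
  | add u v hu hv => rw [tmul_add, map_add, map_add, hu, hv, mul_add]

variable {ρ : T → T ⊗[k] H} {β : T ⊗[k] T →ₗ[k] T ⊗[k] H}

theorem galoisMap_one_tmul (hβ : ∀ x y : T, β (x ⊗ₜ y) = (x ⊗ₜ 1) * ρ y) (x : T) :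
    β (1 ⊗ₜ x) = ρ x := by
  rw [hβ, ← Algebra.TensorProduct.one_def, one_mul]

theorem galoisMap_tmul_one_mul (hβ : ∀ x y : T, β (x ⊗ₜ y) = (x ⊗ₜ 1) * ρ y)
    (t : T) (z : T ⊗[k] T) : β ((t ⊗ₜ 1) * z) = (t ⊗ₜ 1) * β z := by
  induction z using TensorProduct.induction_on with
  | zero => simp only [mul_zero, map_zero]
  | tmul a b =>
    rw [Algebra.TensorProduct.tmul_mul_tmul, one_mul, hβ, hβ, ← mul_assoc,
      Algebra.TensorProduct.tmul_mul_tmul, mul_one]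
  | add u v hu hv => rw [mul_add, map_add, hu, hv, map_add, mul_add]

theorem galoisMap_rTensor_mul'_lTensor_translation
    (hβ : ∀ x y : T, β (x ⊗ₜ y) = (x ⊗ₜ 1) * ρ y)
    {γ : H →ₗ[k] T ⊗[k] T} (hγ : ∀ h : H, β (γ h) = 1 ⊗ₜ h) (w : T ⊗[k] H) :
    β (rTensor T (mul' k T) ((TensorProduct.assoc k T T T).symm (lTensor T γ w))) = w := by
  induction w using TensorProduct.induction_on with
  | zero => simp only [map_zero]
  | tmul t h =>
    rw [lTensor_tmul, rTensor_mul'_assoc_symm_tmul, galoisMap_tmul_one_mul hβ, hγ,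
      Algebra.TensorProduct.tmul_mul_tmul, mul_one, one_mul]
  | add u v hu hv => simp only [map_add, hu, hv]

end GaloisMap

theorem stmt_4_general
    {k : Type*} [CommRing k] {H : Type*} [Ring H] [HopfAlgebra k H]
    {T : Type*} [Ring T] [Algebra k T]
    -- `ρ` is an algebra map making `T` a right `H`-comodule algebra:
    (ρ : T →ₐ[k] T ⊗[k] H)
    -- the canonical (Galois) map `β(x ⊗ y) = x·y₍₀₎ ⊗ y₍₁₎`, assumed bijective:
    (β : T ⊗[k] T →ₗ[k] T ⊗[k] H)
    (hβ : ∀ x y : T, β (x ⊗ₜ[k] y) = (x ⊗ₜ[k] (1 : H)) * ρ y)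
    (hβbij : Function.Bijective β)
    -- `γ(h) = β⁻¹(1 ⊗ h) = h⁽¹⁾ ⊗ h⁽²⁾`:
    (γ : H →ₗ[k] T ⊗[k] T)
    (hγ : ∀ h : H, β (γ h) = (1 : T) ⊗ₜ[k] h)
    -- `μ(x) = x₍₀₎ ⊗ x₍₁₎⁽¹⁾ ⊗ x₍₁₎⁽²⁾`:
    (μ : T →ₗ[k] T ⊗[k] (T ⊗[k] T))
    (hμ : μ = (LinearMap.lTensor T γ) ∘ₗ ρ.toLinearMap) :
    ∀ x : T,
      (LinearMap.rTensor T (LinearMap.mul' k T))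
        ((TensorProduct.assoc k T T T).symm (μ x)) = (1 : T) ⊗ₜ[k] x := by
  intro x
  apply hβbij.injective
  rw [galoisMap_one_tmul hβ, hμ]
  exact galoisMap_rTensor_mul'_lTensor_translation hβ hγ (ρ x)

/-- For a faithfully flat `H`-Galois object `T`, the map
`μ(x) = x₍₀₎ ⊗ x₍₁₎⁽¹⁾ ⊗ x₍₁₎⁽²⁾` satisfies the second torsor axiom
`(∇ ⊗ id_T)(μ(x)) = 1 ⊗ x`. -/
theorem stmt_4
    {k : Type*} [CommRing k] {H : Type*} [Ring H] [HopfAlgebra k H]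
    {T : Type*} [Ring T] [Algebra k T]
    -- `ρ` is an algebra map making `T` a right `H`-comodule algebra:
    (ρ : T →ₐ[k] T ⊗[k] H)
    (hcoassoc : ∀ x : T,
      (TensorProduct.map ρ.toLinearMap LinearMap.id) (ρ x)
        = (TensorProduct.assoc k T H H).symm
            ((TensorProduct.map LinearMap.id Coalgebra.comul) (ρ x)))
    (hcounit : ∀ x : T,
      (TensorProduct.rid k T)
        ((TensorProduct.map LinearMap.id Coalgebra.counit) (ρ x)) = x)
    -- the coinvariants are exactly `k·1`:
    (hcoinv : {t : T | ρ t = t ⊗ₜ[k] (1 : H)} = Set.range (algebraMap k T))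
    -- `T` is faithfully flat over `k`:
    (hflat : Module.FaithfullyFlat k T)
    -- the canonical (Galois) map `β(x ⊗ y) = x·y₍₀₎ ⊗ y₍₁₎`, assumed bijective:
    (β : T ⊗[k] T →ₗ[k] T ⊗[k] H)
    (hβ : ∀ x y : T, β (x ⊗ₜ[k] y) = (x ⊗ₜ[k] (1 : H)) * ρ y)
    (hβbij : Function.Bijective β)
    -- `γ(h) = β⁻¹(1 ⊗ h) = h⁽¹⁾ ⊗ h⁽²⁾`:
    (γ : H →ₗ[k] T ⊗[k] T)
    (hγ : ∀ h : H, β (γ h) = (1 : T) ⊗ₜ[k] h)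
    -- `μ(x) = x₍₀₎ ⊗ x₍₁₎⁽¹⁾ ⊗ x₍₁₎⁽²⁾`:
    (μ : T →ₗ[k] T ⊗[k] (T ⊗[k] T))
    (hμ : μ = (LinearMap.lTensor T γ) ∘ₗ ρ.toLinearMap) :
    ∀ x : T,
      (LinearMap.rTensor T (LinearMap.mul' k T))
        ((TensorProduct.assoc k T T T).symm (μ x)) = (1 : T) ⊗ₜ[k] x :=
  stmt_4_general ρ β hβ hβbij γ hγ μ hμ
end

section
/- Let T be a faithfully flat H-Galois object over k. Then the map θ is a unital algebra endomorphism of T: θ(1) = 1 and θ(x·y) = θ(x)·θ(y) for all x, y ∈ T. -/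
/-!
Moving the first tensor leg to `Tᵐᵒᵖ`, the translation map `γ : H → Tᵐᵒᵖ ⊗ T` becomes an
algebra map (both sides of `γ(gh) = γ(g)γ(h)` have the same image under the injective canonical
map), so `γ ∘ S` is its convolution inverse. Put `F(x) = (1 ⊗ x₍₀₎)·γ(S x₍₁₎) ∈ Tᵐᵒᵖ ⊗ T`; then
`θ(x)` is `F(x)` with its legs multiplied in reverse order. Since
`(id ⊗ ρ)γ(h) = γ(h₍₁₎) ⊗ h₍₂₎`, uniqueness of convolution inverses gives
`(id ⊗ ρ)γ(S h) = γ(S h₍₂₎) ⊗ S h₍₁₎`, and coassociativity of `ρ` together with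
`h₍₁₎ S(h₍₂₎) = ε(h)` turns this into `(id ⊗ ρ)F(x) = F(x) ⊗ 1`. As the canonical map is
`β = (μ ⊗ id) ∘ (id ⊗ ρ)` and is injective, `F(x) = θ(x) ⊗ 1`. Finally `F` pairs an algebra map
on `T` with an anti-algebra map on `H`, so `F(xy) = F(y)F(x)` as soon as `F(y)` commutes with
`1 ⊗ T`; reading off the first leg in `Tᵐᵒᵖ` gives `θ(xy) = θ(x)θ(y)`.
-/

open TensorProduct LinearMap HopfAlgebra Coalgebra WithConv MulOpposite

section CoactionConv

variable {k : Type*} [CommSemiring k] {H : Type*} [AddCommMonoid H] [Module k H]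
  {T : Type*} [AddCommMonoid T] [Module k T] {A : Type*} [Semiring A] [Algebra k A]

def IsCoassociative [Coalgebra k H] (ρ : T →ₗ[k] T ⊗[k] H) : Prop :=
  ∀ x, map ρ LinearMap.id (ρ x) = (TensorProduct.assoc k T H H).symm (map LinearMap.id comul (ρ x))

/-- The right action of the convolution algebra `Hom(H, A)` on `Hom(T, A)` induced by the
coaction `ρ`. -/
noncomputable def coactionConv (ρ : T →ₗ[k] T ⊗[k] H) (f : T →ₗ[k] A)
    (g : WithConv (H →ₗ[k] A)) : T →ₗ[k] A :=
  mul' k A ∘ₗ map f g.ofConv ∘ₗ ρ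

lemma coactionConv_apply (ρ : T →ₗ[k] T ⊗[k] H) (f : T →ₗ[k] A) (g : WithConv (H →ₗ[k] A))
    (x : T) : coactionConv ρ f g x = mul' k A (map f g.ofConv (ρ x)) := rfl

lemma AlgHom.comp_coactionConv {B : Type*} [Semiring B] [Algebra k B] (φ : A →ₐ[k] B)
    (ρ : T →ₗ[k] T ⊗[k] H) (f : T →ₗ[k] A) (g : WithConv (H →ₗ[k] A)) :
    φ.toLinearMap ∘ₗ coactionConv ρ f g =
      coactionConv ρ (φ.toLinearMap ∘ₗ f) (toConv (φ.toLinearMap ∘ₗ g.ofConv)) := by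
  simp only [coactionConv, map_comp, ← LinearMap.comp_assoc, AlgHom.comp_mul']

lemma coactionConv_coactionConv [Coalgebra k H] {ρ : T →ₗ[k] T ⊗[k] H} (hρ : IsCoassociative ρ)
    (f : T →ₗ[k] A) (g g' : WithConv (H →ₗ[k] A)) :
    coactionConv ρ (coactionConv ρ f g) g' = coactionConv ρ f (g * g') := by
  have hleft : mul' k A ∘ₗ map (coactionConv ρ f g) g'.ofConv =
      mul' k A ∘ₗ rTensor A (mul' k A) ∘ₗ map (map f g.ofConv) g'.ofConv ∘ₗ rTensor H ρ :=
    TensorProduct.ext' fun x h => by simp [coactionConv_apply]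
  have hassoc : mul' k A ∘ₗ rTensor A (mul' k A) ∘ₗ map (map f g.ofConv) g'.ofConv ∘ₗ
      (TensorProduct.assoc k T H H).symm.toLinearMap =
      mul' k A ∘ₗ map f (mul' k A ∘ₗ map g.ofConv g'.ofConv) :=
    TensorProduct.ext_threefold' fun x h h' => by simp [mul_assoc]
  ext x
  calc coactionConv ρ (coactionConv ρ f g) g' x
      = (mul' k A ∘ₗ rTensor A (mul' k A) ∘ₗ map (map f g.ofConv) g'.ofConv ∘ₗ
          (TensorProduct.assoc k T H H).symm.toLinearMap) (lTensor T comul (ρ x)) := by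
        rw [coactionConv_apply, ← LinearMap.comp_apply (mul' k A), hleft]
        simp only [LinearMap.comp_apply]
        exact congrArg (fun u => mul' k A (rTensor A (mul' k A) (map _ _ u))) (hρ x)
    _ = coactionConv ρ f (g * g') x := by
        rw [hassoc, coactionConv_apply, LinearMap.comp_apply, ← LinearMap.comp_apply (map _ _),
          map_comp_lTensor]
        rfl

end CoactionConv

section CoactionConvMul

variable {k : Type*} [CommSemiring k] {H : Type*} [Semiring H] [Algebra k H]
  {T : Type*} [Semiring T] [Algebra k T] {A : Type*} [Semiring A] [Algebra k A]

lemma coactionConv_mul_of_commute (ρ : T →ₐ[k] T ⊗[k] H) (f : T →ₐ[k] A) (g : H →ₗ[k] A)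
    (hg : ∀ a b, g (a * b) = g b * g a) {x y : T}
    (hy : ∀ t, Commute (f t) (coactionConv ρ.toLinearMap f.toLinearMap (toConv g) y)) :
    coactionConv ρ.toLinearMap f.toLinearMap (toConv g) (x * y) =
      coactionConv ρ.toLinearMap f.toLinearMap (toConv g) y *
      coactionConv ρ.toLinearMap f.toLinearMap (toConv g) x := by
  set F : T ⊗[k] H →ₗ[k] A := mul' k A ∘ₗ map f.toLinearMap g
  have hF : ∀ t h v, F ((t ⊗ₜ h) * v) = f t * F v * g h := by
    intro t h v
    induction v using TensorProduct.induction_on with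
    | zero => simp
    | tmul s h' => simp [F, Algebra.TensorProduct.tmul_mul_tmul, hg, mul_assoc]
    | add v v' hv hv' => simp [mul_add, add_mul, hv, hv']
  replace hy : ∀ t, Commute (f t) (F (ρ y)) := hy
  show F (ρ (x * y)) = F (ρ y) * F (ρ x)
  rw [map_mul]
  induction ρ x using TensorProduct.induction_on with
  | zero => simp
  | tmul t h => rw [hF, (hy t).eq, mul_assoc]; rfl
  | add u u' hu hu' => simp [add_mul, mul_add, hu, hu']

end CoactionConvMul

section ConvInverse

variable {k : Type*} [CommSemiring k] {H : Type*} [Semiring H] [HopfAlgebra k H]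
  {A : Type*} [Semiring A] [Algebra k A]

lemma AlgHom.toConv_mul_toConv_comp_antipode (φ : H →ₐ[k] A) :
    toConv φ.toLinearMap * toConv (φ.toLinearMap ∘ₗ antipode k) = 1 := by
  have := algHom_comp_convMul_distrib φ (toConv LinearMap.id) (toConv (antipode k (A := H)))
  rw [LinearMap.id_mul_antipode, LinearMap.comp_id] at this
  apply WithConv.ofConv_injective
  rw [← this]
  ext h
  simp

lemma AlgHom.toConv_comp_antipode_mul_toConv (φ : H →ₐ[k] A) :
    toConv (φ.toLinearMap ∘ₗ antipode k) * toConv φ.toLinearMap = 1 := by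
  have := algHom_comp_convMul_distrib φ (toConv (antipode k (A := H))) (toConv LinearMap.id)
  rw [LinearMap.antipode_mul_id, LinearMap.comp_id] at this
  apply WithConv.ofConv_injective
  rw [← this]
  ext h
  simp

end ConvInverse

section CanonicalMap

variable {k : Type*} [CommSemiring k] {H : Type*} [Semiring H] [Bialgebra k H]
  {T : Type*} [Semiring T] [Algebra k T] (ρ : T →ₐ[k] T ⊗[k] H)

/-- The first leg lives in `Tᵐᵒᵖ` so that the translation map `β⁻¹(1 ⊗ -)` is multiplicative. -/
noncomputable def canonicalMap : Tᵐᵒᵖ ⊗[k] T →ₗ[k] T ⊗[k] H :=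
  mul' k (T ⊗[k] H) ∘ₗ map (Algebra.TensorProduct.includeLeft.toLinearMap ∘ₗ
    (opLinearEquiv k).symm.toLinearMap) ρ.toLinearMap

@[simp] lemma canonicalMap_tmul (a : Tᵐᵒᵖ) (b : T) :
    canonicalMap ρ (a ⊗ₜ b) = (a.unop ⊗ₜ 1) * ρ b := rfl

noncomputable def opCoaction : Tᵐᵒᵖ ⊗[k] T →ₐ[k] (Tᵐᵒᵖ ⊗[k] T) ⊗[k] H :=
  (Algebra.TensorProduct.assoc k k k Tᵐᵒᵖ T H).symm.toAlgHom.comp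
    (Algebra.TensorProduct.map (AlgHom.id k Tᵐᵒᵖ) ρ)

lemma opCoaction_tmul (a : Tᵐᵒᵖ) (b : T) :
    opCoaction ρ (a ⊗ₜ b) = (TensorProduct.assoc k Tᵐᵒᵖ T H).symm (a ⊗ₜ ρ b) := rfl

variable (k T) in
noncomputable def unopMul : Tᵐᵒᵖ ⊗[k] T →ₗ[k] T :=
  mul' k T ∘ₗ rTensor T (opLinearEquiv k).symm.toLinearMap

@[simp] lemma unopMul_tmul (a : Tᵐᵒᵖ) (b : T) : unopMul k T (a ⊗ₜ b) = a.unop * b := rfl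

lemma canonicalMap_eq_rTensor_unopMul_comp :
    canonicalMap ρ = rTensor H (unopMul k T) ∘ₗ (opCoaction ρ).toLinearMap := by
  refine TensorProduct.ext' fun a b => ?_
  simp only [canonicalMap_tmul, LinearMap.comp_apply, AlgHom.toLinearMap_apply, opCoaction_tmul]
  induction ρ b using TensorProduct.induction_on with
  | zero => simp
  | tmul t h => simp [Algebra.TensorProduct.tmul_mul_tmul]
  | add u u' hu hu' => simp [mul_add, tmul_add, hu, hu']

lemma canonicalMap_mul_tmul (w : Tᵐᵒᵖ ⊗[k] T) (a : Tᵐᵒᵖ) (b : T) :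
    canonicalMap ρ (w * (a ⊗ₜ b)) = (a.unop ⊗ₜ 1) * canonicalMap ρ w * ρ b := by
  induction w using TensorProduct.induction_on with
  | zero => simp
  | tmul c d =>
    simp only [Algebra.TensorProduct.tmul_mul_tmul, canonicalMap_tmul, unop_mul, map_mul]
    rw [← mul_one (1 : H), ← Algebra.TensorProduct.tmul_mul_tmul, mul_one]
    simp only [mul_assoc]
  | add w w' hw hw' => simp [add_mul, mul_add, hw, hw']

lemma canonicalMap_mul_of_eq_one_tmul {w : Tᵐᵒᵖ ⊗[k] T} {g : H}
    (hw : canonicalMap ρ w = 1 ⊗ₜ g) (w' : Tᵐᵒᵖ ⊗[k] T) :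
    canonicalMap ρ (w * w') = (1 ⊗ₜ g) * canonicalMap ρ w' := by
  induction w' using TensorProduct.induction_on with
  | zero => simp
  | tmul a b =>
    have hcomm : Commute (a.unop ⊗ₜ[k] (1 : H)) (1 ⊗ₜ g) := by
      simp [Commute, SemiconjBy, Algebra.TensorProduct.tmul_mul_tmul]
    rw [canonicalMap_mul_tmul, hw, hcomm.eq, canonicalMap_tmul, mul_assoc]
  | add w₁ w₂ h₁ h₂ => simp [mul_add, h₁, h₂]

lemma rTensor_canonicalMap_opCoaction (hρ : IsCoassociative ρ.toLinearMap)
    (w : Tᵐᵒᵖ ⊗[k] T) :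
    rTensor H (canonicalMap ρ) (opCoaction ρ w) =
      (TensorProduct.assoc k T H H).symm (lTensor T comul (canonicalMap ρ w)) := by
  let ψ : T ⊗[k] H →ₐ[k] (T ⊗[k] H) ⊗[k] H :=
    (Algebra.TensorProduct.assoc k k k T H H).symm.toAlgHom.comp
      (Algebra.TensorProduct.map (AlgHom.id k T) (Bialgebra.comulAlgHom k H))
  have hψ (Y : T ⊗[k] H) : ψ Y = (TensorProduct.assoc k T H H).symm (lTensor T comul Y) := rfl
  induction w using TensorProduct.induction_on with
  | zero => simp
  | tmul a b =>
    have hleft (Y : T ⊗[k] H) : rTensor H (canonicalMap ρ)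
        ((TensorProduct.assoc k Tᵐᵒᵖ T H).symm (a ⊗ₜ Y)) =
          (a.unop ⊗ₜ 1) ⊗ₜ 1 * rTensor H ρ Y := by
      induction Y using TensorProduct.induction_on with
      | zero => simp
      | tmul t h => simp [Algebra.TensorProduct.tmul_mul_tmul]
      | add u u' hu hu' => simp [tmul_add, mul_add, hu, hu']
    rw [opCoaction_tmul, hleft, canonicalMap_tmul, ← hψ, map_mul, hψ, hψ]
    simp only [lTensor_tmul, Bialgebra.comul_one, Algebra.TensorProduct.one_def]
    congr 1
    exact hρ b
  | add w w' hw hw' => simp [hw, hw']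

lemma exists_eq_op_tmul_one_of_opCoaction_eq (hinj : Function.Injective (canonicalMap ρ))
    {w : Tᵐᵒᵖ ⊗[k] T} (hw : opCoaction ρ w = w ⊗ₜ 1) : ∃ c : T, w = op c ⊗ₜ 1 :=
  ⟨unopMul k T w, hinj <| by
    rw [canonicalMap_tmul, canonicalMap_eq_rTensor_unopMul_comp, LinearMap.comp_apply,
      AlgHom.toLinearMap_apply, hw]
    simp⟩

variable {ρ} {γ : H →ₗ[k] Tᵐᵒᵖ ⊗[k] T}

lemma translation_one (hinj : Function.Injective (canonicalMap ρ))
    (hγ : ∀ h, canonicalMap ρ (γ h) = 1 ⊗ₜ h) : γ 1 = 1 :=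
  hinj <| by simp [hγ, Algebra.TensorProduct.one_def]

lemma translation_mul (hinj : Function.Injective (canonicalMap ρ))
    (hγ : ∀ h, canonicalMap ρ (γ h) = 1 ⊗ₜ h) (g h : H) : γ (g * h) = γ g * γ h :=
  hinj <| by
    rw [canonicalMap_mul_of_eq_one_tmul ρ (hγ g), hγ, hγ, Algebra.TensorProduct.tmul_mul_tmul,
      one_mul]

lemma opCoaction_translation (hbij : Function.Bijective (canonicalMap ρ))
    (hγ : ∀ h, canonicalMap ρ (γ h) = 1 ⊗ₜ h) (hρ : IsCoassociative ρ.toLinearMap) (h : H) :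
    opCoaction ρ (γ h) = rTensor H γ (comul h) := by
  apply (LinearEquiv.rTensor H (LinearEquiv.ofBijective _ hbij)).injective
  show rTensor H (canonicalMap ρ) _ = rTensor H (canonicalMap ρ) _
  rw [rTensor_canonicalMap_opCoaction ρ hρ, hγ, ← rTensor_comp_apply, lTensor_tmul]
  induction comul (R := k) h using TensorProduct.induction_on with
  | zero => simp
  | tmul a b => simp [hγ]
  | add u u' hu hu' => simp [tmul_add, hu, hu']

end CanonicalMap

section TranslationTwist

variable {k : Type*} [CommSemiring k] {H : Type*} [Semiring H] [HopfAlgebra k H]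
  {T : Type*} [Semiring T] [Algebra k T] {ρ : T →ₐ[k] T ⊗[k] H}

lemma toConv_opCoaction_comp_translation (hbij : Function.Bijective (canonicalMap ρ))
    (hρ : IsCoassociative ρ.toLinearMap)
    {γ : H →ₐ[k] Tᵐᵒᵖ ⊗[k] T} (hγ : ∀ h, canonicalMap ρ (γ h) = 1 ⊗ₜ h) :
    toConv ((opCoaction ρ).comp γ).toLinearMap =
      toConv (Algebra.TensorProduct.includeLeft.comp γ).toLinearMap *
        toConv (Algebra.TensorProduct.includeRight (A := Tᵐᵒᵖ ⊗[k] T)).toLinearMap := by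
  ext h
  simp only [AlgHom.comp_toLinearMap, LinearMap.convMul_apply, LinearMap.comp_apply,
    AlgHom.toLinearMap_apply]
  rw [show opCoaction ρ (γ h) = rTensor H γ.toLinearMap (comul h) from
    opCoaction_translation (γ := γ.toLinearMap) hbij hγ hρ h]
  induction comul (R := k) h using TensorProduct.induction_on with
  | zero => simp
  | tmul a b => simp [Algebra.TensorProduct.tmul_mul_tmul]
  | add u u' hu hu' => simp [hu, hu']

lemma toConv_opCoaction_comp_translation_comp_antipode
    (hbij : Function.Bijective (canonicalMap ρ)) (hρ : IsCoassociative ρ.toLinearMap)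
    {γ : H →ₐ[k] Tᵐᵒᵖ ⊗[k] T} (hγ : ∀ h, canonicalMap ρ (γ h) = 1 ⊗ₜ h) :
    toConv (((opCoaction ρ).comp γ).toLinearMap ∘ₗ antipode k) =
      toConv ((Algebra.TensorProduct.includeRight (A := Tᵐᵒᵖ ⊗[k] T)).toLinearMap ∘ₗ
        antipode k) * toConv ((Algebra.TensorProduct.includeLeft.comp γ).toLinearMap ∘ₗ
        antipode k) := by
  refine left_inv_eq_right_inv (AlgHom.toConv_comp_antipode_mul_toConv _) ?_
  rw [toConv_opCoaction_comp_translation hbij hρ hγ, mul_assoc,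
    ← mul_assoc (toConv (Algebra.TensorProduct.includeRight (A := Tᵐᵒᵖ ⊗[k] T)).toLinearMap),
    AlgHom.toConv_mul_toConv_comp_antipode, one_mul,
    AlgHom.toConv_mul_toConv_comp_antipode]

lemma opCoaction_comp_includeRight :
    (opCoaction ρ).toLinearMap ∘ₗ (Algebra.TensorProduct.includeRight (A := Tᵐᵒᵖ)).toLinearMap =
      coactionConv ρ.toLinearMap
        (Algebra.TensorProduct.includeLeft.comp Algebra.TensorProduct.includeRight).toLinearMap
        (toConv (Algebra.TensorProduct.includeRight (A := Tᵐᵒᵖ ⊗[k] T)).toLinearMap) := by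
  ext x
  simp only [LinearMap.comp_apply, AlgHom.toLinearMap_apply,
    Algebra.TensorProduct.includeRight_apply, opCoaction_tmul, coactionConv_apply]
  induction ρ x using TensorProduct.induction_on with
  | zero => simp
  | tmul t h => simp [Algebra.TensorProduct.tmul_mul_tmul]
  | add u u' hu hu' => simp [tmul_add, hu, hu']

/-- `x ↦ S(x₍₁₎)⁽¹⁾ ⊗ x₍₀₎ S(x₍₁₎)⁽²⁾`, where `γ h = h⁽¹⁾ ⊗ h⁽²⁾`. -/
noncomputable def translationTwist (ρ : T →ₐ[k] T ⊗[k] H) (γ : H →ₐ[k] Tᵐᵒᵖ ⊗[k] T) :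
    T →ₗ[k] Tᵐᵒᵖ ⊗[k] T :=
  coactionConv ρ.toLinearMap Algebra.TensorProduct.includeRight.toLinearMap
    (toConv (γ.toLinearMap ∘ₗ antipode k))

lemma opCoaction_translationTwist (hbij : Function.Bijective (canonicalMap ρ))
    (hρ : IsCoassociative ρ.toLinearMap)
    {γ : H →ₐ[k] Tᵐᵒᵖ ⊗[k] T} (hγ : ∀ h, canonicalMap ρ (γ h) = 1 ⊗ₜ h) (x : T) :
    opCoaction ρ (translationTwist ρ γ x) = translationTwist ρ γ x ⊗ₜ 1 := by
  have key : (opCoaction ρ).toLinearMap ∘ₗ translationTwist ρ γ =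
      Algebra.TensorProduct.includeLeft.toLinearMap ∘ₗ translationTwist ρ γ := by
    rw [translationTwist, AlgHom.comp_coactionConv, opCoaction_comp_includeRight,
      ← LinearMap.comp_assoc, ← AlgHom.comp_toLinearMap,
      toConv_opCoaction_comp_translation_comp_antipode hbij hρ hγ,
      coactionConv_coactionConv hρ, ← mul_assoc, AlgHom.toConv_mul_toConv_comp_antipode, one_mul,
      AlgHom.comp_coactionConv]
    rfl
  exact LinearMap.congr_fun key x

variable (k T) in
noncomputable def swapMul : Tᵐᵒᵖ ⊗[k] T →ₗ[k] T :=
  mul' k T ∘ₗ (TensorProduct.comm k T T).toLinearMap ∘ₗ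
    rTensor T (opLinearEquiv k).symm.toLinearMap

@[simp] lemma swapMul_tmul (a : Tᵐᵒᵖ) (b : T) : swapMul k T (a ⊗ₜ b) = b * a.unop := rfl

lemma translationTwist_eq_op_tmul_one (hbij : Function.Bijective (canonicalMap ρ))
    (hρ : IsCoassociative ρ.toLinearMap)
    {γ : H →ₐ[k] Tᵐᵒᵖ ⊗[k] T} (hγ : ∀ h, canonicalMap ρ (γ h) = 1 ⊗ₜ h) (x : T) :
    translationTwist ρ γ x = op (swapMul k T (translationTwist ρ γ x)) ⊗ₜ 1 := by
  obtain ⟨c, hc⟩ :=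
    exists_eq_op_tmul_one_of_opCoaction_eq ρ hbij.1 (opCoaction_translationTwist hbij hρ hγ x)
  rw [hc]
  simp

lemma swapMul_translationTwist_one {γ : H →ₐ[k] Tᵐᵒᵖ ⊗[k] T} :
    swapMul k T (translationTwist ρ γ 1) = 1 := by
  simp [translationTwist, coactionConv_apply, Algebra.TensorProduct.one_def]

lemma swapMul_translationTwist_mul (hbij : Function.Bijective (canonicalMap ρ))
    (hρ : IsCoassociative ρ.toLinearMap)
    {γ : H →ₐ[k] Tᵐᵒᵖ ⊗[k] T} (hγ : ∀ h, canonicalMap ρ (γ h) = 1 ⊗ₜ h) (x y : T) :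
    swapMul k T (translationTwist ρ γ (x * y)) =
      swapMul k T (translationTwist ρ γ x) * swapMul k T (translationTwist ρ γ y) := by
  have hF := translationTwist_eq_op_tmul_one hbij hρ hγ
  have hmul : translationTwist ρ γ (x * y) = translationTwist ρ γ y * translationTwist ρ γ x := by
    refine coactionConv_mul_of_commute ρ _ (γ.toLinearMap ∘ₗ antipode k) (fun a b => ?_)
      fun t => ?_
    · simp [antipode_mul_antidistrib]
    · rw [← translationTwist, hF y]
      simp [Commute, SemiconjBy, Algebra.TensorProduct.tmul_mul_tmul]
  rw [hmul, hF x, hF y]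
  simp [Algebra.TensorProduct.tmul_mul_tmul]

end TranslationTwist

lemma theta_eq_swapMul_translationTwist {k : Type*} [CommSemiring k] {H : Type*} [Semiring H]
    [HopfAlgebra k H] {T : Type*} [Semiring T] [Algebra k T] (ρ : T →ₐ[k] T ⊗[k] H)
    (γ : H →ₗ[k] T ⊗[k] T) (γ' : H →ₐ[k] Tᵐᵒᵖ ⊗[k] T)
    (hγ' : ∀ h, γ' h = rTensor T (opLinearEquiv k).toLinearMap (γ h)) :
    LinearMap.mul' k T
        ∘ₗ (TensorProduct.comm k T T).toLinearMap
        ∘ₗ LinearMap.lTensor T (LinearMap.mul' k T)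
        ∘ₗ (TensorProduct.assoc k T T T).toLinearMap
        ∘ₗ LinearMap.rTensor T (TensorProduct.comm k T T).toLinearMap
        ∘ₗ (TensorProduct.assoc k T T T).symm.toLinearMap
        ∘ₗ LinearMap.lTensor T (γ ∘ₗ HopfAlgebra.antipode (R := k))
        ∘ₗ ρ.toLinearMap =
      swapMul k T ∘ₗ translationTwist ρ γ' := by
  ext x
  simp only [LinearMap.comp_apply, translationTwist, coactionConv_apply]
  generalize ρ.toLinearMap x = u
  induction u using TensorProduct.induction_on with
  | zero => simp
  | tmul t h =>
    simp only [lTensor_tmul, LinearMap.comp_apply, map_tmul, AlgHom.toLinearMap_apply, hγ']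
    induction γ (antipode k h) using TensorProduct.induction_on with
    | zero => simp
    | tmul a b => simp [Algebra.TensorProduct.tmul_mul_tmul, mul_assoc]
    | add w w' hw hw' => simp only [tmul_add, map_add, hw, hw']
  | add u u' hu hu' => simp only [map_add, hu, hu']

theorem stmt_6_general
    {k : Type*} [CommRing k] {H : Type*} [Ring H] [HopfAlgebra k H]
    {T : Type*} [Ring T] [Algebra k T]
    -- `ρ` is an algebra map making `T` a right `H`-comodule algebra:
    (ρ : T →ₐ[k] T ⊗[k] H)
    (hcoassoc : ∀ x : T,
      (TensorProduct.map ρ.toLinearMap LinearMap.id) (ρ x)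
        = (TensorProduct.assoc k T H H).symm
            ((TensorProduct.map LinearMap.id Coalgebra.comul) (ρ x)))
    -- the canonical (Galois) map `β(x ⊗ y) = x·y₍₀₎ ⊗ y₍₁₎`, assumed bijective:
    (β : T ⊗[k] T →ₗ[k] T ⊗[k] H)
    (hβ : ∀ x y : T, β (x ⊗ₜ[k] y) = (x ⊗ₜ[k] (1 : H)) * ρ y)
    (hβbij : Function.Bijective β)
    -- `γ(h) = β⁻¹(1 ⊗ h) = h⁽¹⁾ ⊗ h⁽²⁾`:
    (γ : H →ₗ[k] T ⊗[k] T)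
    (hγ : ∀ h : H, β (γ h) = (1 : T) ⊗ₜ[k] h)
    -- `θ(x) = (x₍₀₎·S(x₍₁₎)⁽²⁾)·S(x₍₁₎)⁽¹⁾`:
    (θ : T →ₗ[k] T)
    (hθ : θ = LinearMap.mul' k T
        ∘ₗ (TensorProduct.comm k T T).toLinearMap
        ∘ₗ LinearMap.lTensor T (LinearMap.mul' k T)
        ∘ₗ (TensorProduct.assoc k T T T).toLinearMap
        ∘ₗ LinearMap.rTensor T (TensorProduct.comm k T T).toLinearMap
        ∘ₗ (TensorProduct.assoc k T T T).symm.toLinearMap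
        ∘ₗ LinearMap.lTensor T (γ ∘ₗ HopfAlgebra.antipode (R := k))
        ∘ₗ ρ.toLinearMap)
    :
    θ 1 = 1 ∧ ∀ x y : T, θ (x * y) = θ x * θ y := by
  let e : T ⊗[k] T ≃ₗ[k] Tᵐᵒᵖ ⊗[k] T := LinearEquiv.rTensor T (opLinearEquiv k)
  have hβe : canonicalMap ρ = β ∘ₗ e.symm.toLinearMap :=
    TensorProduct.ext' fun a b => by simp [e, hβ]
  have hbij : Function.Bijective (canonicalMap ρ) := by
    rw [hβe, LinearMap.coe_comp]
    exact hβbij.comp e.symm.bijective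
  have hγe (h : H) : canonicalMap ρ (e (γ h)) = 1 ⊗ₜ h := by simp [hβe, hγ]
  let γe : H →ₐ[k] Tᵐᵒᵖ ⊗[k] T := AlgHom.ofLinearMap (e.toLinearMap ∘ₗ γ)
    (translation_one hbij.1 hγe) (translation_mul hbij.1 hγe)
  have hθe : θ = swapMul k T ∘ₗ translationTwist ρ γe :=
    hθ.trans (theta_eq_swapMul_translationTwist ρ γ γe fun _ => rfl)
  refine ⟨?_, fun x y => ?_⟩
  · rw [hθe, LinearMap.comp_apply, swapMul_translationTwist_one]
  · simp only [hθe, LinearMap.comp_apply,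
      swapMul_translationTwist_mul hbij hcoassoc (γ := γe) hγe]

/-- For a faithfully flat `H`-Galois object `T`, the map
`θ(x) = (x₍₀₎·S(x₍₁₎)⁽²⁾)·S(x₍₁₎)⁽¹⁾` is a unital algebra endomorphism of `T`. -/
theorem stmt_6
    {k : Type*} [CommRing k] {H : Type*} [Ring H] [HopfAlgebra k H]
    {T : Type*} [Ring T] [Algebra k T]
    -- `ρ` is an algebra map making `T` a right `H`-comodule algebra:
    (ρ : T →ₐ[k] T ⊗[k] H)
    (hcoassoc : ∀ x : T,
      (TensorProduct.map ρ.toLinearMap LinearMap.id) (ρ x)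
        = (TensorProduct.assoc k T H H).symm
            ((TensorProduct.map LinearMap.id Coalgebra.comul) (ρ x)))
    (hcounit : ∀ x : T,
      (TensorProduct.rid k T)
        ((TensorProduct.map LinearMap.id Coalgebra.counit) (ρ x)) = x)
    -- the coinvariants are exactly `k·1`:
    (hcoinv : {t : T | ρ t = t ⊗ₜ[k] (1 : H)} = Set.range (algebraMap k T))
    -- `T` is faithfully flat over `k`:
    (hflat : Module.FaithfullyFlat k T)
    -- the canonical (Galois) map `β(x ⊗ y) = x·y₍₀₎ ⊗ y₍₁₎`, assumed bijective:
    (β : T ⊗[k] T →ₗ[k] T ⊗[k] H)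
    (hβ : ∀ x y : T, β (x ⊗ₜ[k] y) = (x ⊗ₜ[k] (1 : H)) * ρ y)
    (hβbij : Function.Bijective β)
    -- `γ(h) = β⁻¹(1 ⊗ h) = h⁽¹⁾ ⊗ h⁽²⁾`:
    (γ : H →ₗ[k] T ⊗[k] T)
    (hγ : ∀ h : H, β (γ h) = (1 : T) ⊗ₜ[k] h)
    -- `θ(x) = (x₍₀₎·S(x₍₁₎)⁽²⁾)·S(x₍₁₎)⁽¹⁾`:
    (θ : T →ₗ[k] T)
    (hθ : θ = LinearMap.mul' k T
        ∘ₗ (TensorProduct.comm k T T).toLinearMap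
        ∘ₗ LinearMap.lTensor T (LinearMap.mul' k T)
        ∘ₗ (TensorProduct.assoc k T T T).toLinearMap
        ∘ₗ LinearMap.rTensor T (TensorProduct.comm k T T).toLinearMap
        ∘ₗ (TensorProduct.assoc k T T T).symm.toLinearMap
        ∘ₗ LinearMap.lTensor T (γ ∘ₗ HopfAlgebra.antipode (R := k))
        ∘ₗ ρ.toLinearMap)
    :
    θ 1 = 1 ∧ ∀ x y : T, θ (x * y) = θ x * θ y :=
  stmt_6_general ρ hcoassoc β hβ hβbij γ hγ θ hθ
end

section
/- Let T be a faithfully flat H-Galois object over k. Then μ and θ satisfy the fourth torsor axiom: (id_T ⊗ id_T ⊗ θ ⊗ id_T ⊗ id_T)∘(μ ⊗ id_T ⊗ id_T)∘μ = (id_T ⊗ μᵒᵖ ⊗ id_T)∘μ as maps T → T ⊗ T ⊗ T ⊗ T ⊗ T, where μᵒᵖ := τ₍₁₃₎∘μ and τ₍₁₃₎ : T ⊗ T ⊗ T → T ⊗ T ⊗ T exchanges the first and third tensor factors. -/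
open TensorProduct LinearMap HopfAlgebra

open Coalgebra
set_option maxHeartbeats 1000000
set_option synthInstance.maxHeartbeats 400000
set_option linter.unusedVariables false
set_option maxHeartbeats 1000000
set_option synthInstance.maxHeartbeats 400000

section Conv
variable {k : Type*} [CommRing k] {H : Type*} [Ring H] [HopfAlgebra k H]
  {B : Type*} [Ring B] [Algebra k B]

noncomputable def conv (f g : H →ₗ[k] B) : H →ₗ[k] B :=
  LinearMap.mul' k B ∘ₗ TensorProduct.map f g ∘ₗ Coalgebra.comul

noncomputable def cunit : H →ₗ[k] B := (Algebra.linearMap k B) ∘ₗ Coalgebra.counit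

lemma conv_one_mul (f : H →ₗ[k] B) : conv cunit f = f := by
  unfold conv cunit
  have h1 : TensorProduct.map ((Algebra.linearMap k B) ∘ₗ Coalgebra.counit (R := k) (A := H)) f
      = TensorProduct.map (Algebra.linearMap k B) f
        ∘ₗ LinearMap.rTensor H (Coalgebra.counit (R := k) (A := H)) := by
    rw [LinearMap.rTensor, ← TensorProduct.map_comp, LinearMap.comp_id]
  apply LinearMap.ext; intro h
  simp only [LinearMap.comp_apply, h1]
  rw [show (LinearMap.rTensor H (Coalgebra.counit (R := k) (A := H))) (Coalgebra.comul h)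
      = (1:k) ⊗ₜ[k] h from Coalgebra.rTensor_counit_comul h]
  simp

lemma conv_mul_one (f : H →ₗ[k] B) : conv f cunit = f := by
  unfold conv cunit
  have h1 : TensorProduct.map f ((Algebra.linearMap k B) ∘ₗ Coalgebra.counit (R := k) (A := H))
      = TensorProduct.map f (Algebra.linearMap k B)
        ∘ₗ LinearMap.lTensor H (Coalgebra.counit (R := k) (A := H)) := by
    rw [LinearMap.lTensor, ← TensorProduct.map_comp, LinearMap.comp_id]
  apply LinearMap.ext; intro h
  simp only [LinearMap.comp_apply, h1]
  rw [show (LinearMap.lTensor H (Coalgebra.counit (R := k) (A := H))) (Coalgebra.comul h)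
      = h ⊗ₜ[k] (1:k) from Coalgebra.lTensor_counit_comul h]
  simp

lemma mul_assoc_lin :
    LinearMap.mul' k B ∘ₗ LinearMap.lTensor B (LinearMap.mul' k B)
        ∘ₗ (TensorProduct.assoc k B B B).toLinearMap
      = LinearMap.mul' k B ∘ₗ LinearMap.rTensor B (LinearMap.mul' k B) := by
  apply TensorProduct.ext_threefold
  intro x y z
  simp [mul_assoc]

lemma conv_assoc (f g h : H →ₗ[k] B) : conv (conv f g) h = conv f (conv g h) := by
  unfold conv
  have e1 : TensorProduct.map (LinearMap.mul' k B ∘ₗ TensorProduct.map f g ∘ₗ Coalgebra.comul) h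
      = LinearMap.rTensor B (LinearMap.mul' k B) ∘ₗ TensorProduct.map (TensorProduct.map f g) h
        ∘ₗ LinearMap.rTensor H (Coalgebra.comul (R := k)) := by
    rw [LinearMap.rTensor, LinearMap.rTensor, ← TensorProduct.map_comp, ← TensorProduct.map_comp]
    simp [LinearMap.comp_assoc]
  have e2 : TensorProduct.map f (LinearMap.mul' k B ∘ₗ TensorProduct.map g h ∘ₗ Coalgebra.comul)
      = LinearMap.lTensor B (LinearMap.mul' k B) ∘ₗ TensorProduct.map f (TensorProduct.map g h)
        ∘ₗ LinearMap.lTensor H (Coalgebra.comul (R := k)) := by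
    rw [LinearMap.lTensor, LinearMap.lTensor, ← TensorProduct.map_comp, ← TensorProduct.map_comp]
    simp [LinearMap.comp_assoc]
  rw [e1, e2]
  apply LinearMap.ext; intro a
  simp only [LinearMap.comp_apply]
  rw [← Coalgebra.coassoc_symm_apply (R := k) a]
  rw [TensorProduct.map_map_assoc_symm]
  set Z := TensorProduct.map f (TensorProduct.map g h)
    ((LinearMap.lTensor H (Coalgebra.comul (R := k))) (Coalgebra.comul a)) with hZ
  have := LinearMap.congr_fun (mul_assoc_lin (k := k) (B := B))
    ((TensorProduct.assoc k B B B).symm Z)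
  simp only [LinearMap.comp_apply, LinearEquiv.coe_coe, LinearEquiv.apply_symm_apply] at this
  rw [← this]
end Conv

section Galois
variable {k : Type*} [CommRing k] {H : Type*} [Ring H] [HopfAlgebra k H]
  {T : Type*} [Ring T] [Algebra k T]

variable (ρ : T →ₐ[k] T ⊗[k] H) (β : T ⊗[k] T →ₗ[k] T ⊗[k] H) (γ : H →ₗ[k] T ⊗[k] T)

-- γ(1) = 1 ⊗ 1
lemma gal_gamma_one (hβ : ∀ x y : T, β (x ⊗ₜ[k] y) = (x ⊗ₜ[k] (1 : H)) * ρ y)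
    (hβbij : Function.Bijective β) (hγ : ∀ h : H, β (γ h) = (1 : T) ⊗ₜ[k] h) :
    γ (1 : H) = (1 : T) ⊗ₜ[k] (1 : T) := by
  apply hβbij.injective
  rw [hγ, hβ]
  simp

-- (id ⊗ ε) ∘ β = mul'
lemma gal_counit_beta
    (hcounit : ∀ x : T,
      (TensorProduct.rid k T)
        ((TensorProduct.map LinearMap.id Coalgebra.counit) (ρ x)) = x)
    (hβ : ∀ x y : T, β (x ⊗ₜ[k] y) = (x ⊗ₜ[k] (1 : H)) * ρ y)
    (w : T ⊗[k] T) :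
    (TensorProduct.rid k T)
      ((TensorProduct.map LinearMap.id (Coalgebra.counit (R := k) (A := H))) (β w))
      = LinearMap.mul' k T w := by
  induction w using TensorProduct.induction_on with
  | zero => simp
  | add u v hu hv => rw [map_add, map_add, map_add, map_add, hu, hv]
  | tmul x y =>
    rw [hβ]
    have aux : ∀ v : T ⊗[k] H,
        (TensorProduct.rid k T)
          ((TensorProduct.map LinearMap.id (Coalgebra.counit (R := k) (A := H)))
            ((x ⊗ₜ[k] (1 : H)) * v))
        = x * (TensorProduct.rid k T)
            ((TensorProduct.map LinearMap.id (Coalgebra.counit (R := k) (A := H))) v) := by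
      intro v
      induction v using TensorProduct.induction_on with
      | zero => simp
      | add u v hu hv => rw [mul_add, map_add, map_add, hu, hv, map_add, map_add, mul_add]
      | tmul t g =>
        simp [Algebra.TensorProduct.tmul_mul_tmul, TensorProduct.smul_tmul',
          Algebra.mul_smul_comm]
    rw [aux, hcounit, LinearMap.mul'_apply]

-- mul' (γ h) = ε(h) • 1
lemma gal_mul_gamma
    (hcounit : ∀ x : T,
      (TensorProduct.rid k T)
        ((TensorProduct.map LinearMap.id Coalgebra.counit) (ρ x)) = x)
    (hβ : ∀ x y : T, β (x ⊗ₜ[k] y) = (x ⊗ₜ[k] (1 : H)) * ρ y)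
    (hγ : ∀ h : H, β (γ h) = (1 : T) ⊗ₜ[k] h) (h : H) :
    LinearMap.mul' k T (γ h) = algebraMap k T (Coalgebra.counit (R := k) h) := by
  rw [← gal_counit_beta ρ β hcounit hβ (γ h), hγ h]
  simp [Algebra.smul_def]

end Galois

section Galois2
variable {k : Type*} [CommRing k] {H : Type*} [Ring H] [HopfAlgebra k H]
  {T : Type*} [Ring T] [Algebra k T]

variable (ρ : T →ₐ[k] T ⊗[k] H) (β : T ⊗[k] T →ₗ[k] T ⊗[k] H) (γ : H →ₗ[k] T ⊗[k] T)

lemma gal_rT_beta_inj (hβbij : Function.Bijective β) :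
    Function.Injective (LinearMap.rTensor H β) := by
  have he : LinearMap.rTensor H β
      = (TensorProduct.congr (LinearEquiv.ofBijective β hβbij)
          (LinearEquiv.refl k H)).toLinearMap := by
    apply TensorProduct.ext'
    intro w h
    simp [TensorProduct.congr_tmul, LinearEquiv.ofBijective_apply]
  rw [he]
  exact (TensorProduct.congr (LinearEquiv.ofBijective β hβbij) (LinearEquiv.refl k H)).injective

-- key "identity (ii)": assoc⁻¹ ((id ⊗ ρ)(γ h)) = (γ ⊗ id)(Δ h)
lemma gal_Lii
    (hcoassoc : ∀ x : T,
      (TensorProduct.map ρ.toLinearMap LinearMap.id) (ρ x)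
        = (TensorProduct.assoc k T H H).symm
            ((TensorProduct.map LinearMap.id Coalgebra.comul) (ρ x)))
    (hβ : ∀ x y : T, β (x ⊗ₜ[k] y) = (x ⊗ₜ[k] (1 : H)) * ρ y)
    (hβbij : Function.Bijective β)
    (hγ : ∀ h : H, β (γ h) = (1 : T) ⊗ₜ[k] h) (h : H) :
    (TensorProduct.assoc k T T H).symm
        ((LinearMap.lTensor T ρ.toLinearMap) (γ h))
      = (LinearMap.rTensor H γ) (Coalgebra.comul h) := by
  apply gal_rT_beta_inj β hβbij
  -- LHS computation: map-level identity applied to γ h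
  have key : ∀ w : T ⊗[k] T,
      LinearMap.rTensor H β ((TensorProduct.assoc k T T H).symm
          ((LinearMap.lTensor T ρ.toLinearMap) w))
      = (TensorProduct.assoc k T H H).symm
          ((LinearMap.lTensor T (Coalgebra.comul (R := k))) (β w)) := by
    intro w
    induction w using TensorProduct.induction_on with
    | zero => simp
    | add u v hu hv => rw [map_add, map_add, map_add, hu, hv, map_add, map_add, map_add]
    | tmul x y =>
      -- LHS = ((x ⊗ 1) ⊗ 1) * rTensor H ρ (ρ y)
      have aux1 : ∀ v : T ⊗[k] H,
          LinearMap.rTensor H β ((TensorProduct.assoc k T T H).symm (x ⊗ₜ[k] v))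
          = (((x ⊗ₜ[k] (1:H)) ⊗ₜ[k] (1:H)) : (T ⊗[k] H) ⊗[k] H)
              * (LinearMap.rTensor H ρ.toLinearMap v) := by
        intro v
        induction v using TensorProduct.induction_on with
        | zero => simp
        | add u v hu hv => rw [TensorProduct.tmul_add, map_add, map_add, hu, hv, map_add, mul_add]
        | tmul t g =>
          simp only [TensorProduct.assoc_symm_tmul, LinearMap.rTensor_tmul,
            Algebra.TensorProduct.tmul_mul_tmul, hβ, one_mul, AlgHom.toLinearMap_apply]
      have aux2 : ∀ v : T ⊗[k] H,
          (TensorProduct.assoc k T H H).symm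
            ((LinearMap.lTensor T (Coalgebra.comul (R := k))) ((x ⊗ₜ[k] (1:H)) * v))
          = (((x ⊗ₜ[k] (1:H)) ⊗ₜ[k] (1:H)) : (T ⊗[k] H) ⊗[k] H)
              * ((TensorProduct.assoc k T H H).symm
                  ((LinearMap.lTensor T (Coalgebra.comul (R := k))) v)) := by
        intro v
        induction v using TensorProduct.induction_on with
        | zero => simp
        | add u v hu hv => rw [mul_add, map_add, map_add, hu, hv, map_add, map_add, mul_add]
        | tmul t g =>
          simp only [Algebra.TensorProduct.tmul_mul_tmul, LinearMap.lTensor_tmul, one_mul]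
          have aux3 : ∀ (u : H ⊗[k] H) (s : T),
              ((TensorProduct.assoc k T H H).symm ((x * s) ⊗ₜ[k] u))
              = (((x ⊗ₜ[k] (1:H)) ⊗ₜ[k] (1:H)) : (T ⊗[k] H) ⊗[k] H)
                  * ((TensorProduct.assoc k T H H).symm (s ⊗ₜ[k] u)) := by
            intro u s
            induction u using TensorProduct.induction_on with
            | zero => simp
            | add u v hu hv => rw [TensorProduct.tmul_add, map_add, hu, hv,
                TensorProduct.tmul_add, map_add, mul_add]
            | tmul g1 g2 =>
              simp [Algebra.TensorProduct.tmul_mul_tmul]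
          exact aux3 (Coalgebra.comul g) t
      rw [LinearMap.lTensor_tmul, aux1, hβ, aux2]
      congr 1
      have := hcoassoc y
      rw [show TensorProduct.map ρ.toLinearMap LinearMap.id = LinearMap.rTensor H ρ.toLinearMap
        from rfl, show TensorProduct.map LinearMap.id (Coalgebra.comul (R := k))
        = LinearMap.lTensor T (Coalgebra.comul (R := k)) from rfl] at this
      exact this
  rw [key (γ h), hγ h]
  rw [show LinearMap.rTensor H β ((LinearMap.rTensor H γ) (Coalgebra.comul h))
      = LinearMap.rTensor H (β ∘ₗ γ) (Coalgebra.comul h) from by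
    rw [LinearMap.rTensor_comp]; rfl]
  rw [show β ∘ₗ γ = (TensorProduct.mk k T H) 1 from LinearMap.ext fun h' => by
    simp [hγ h']]
  rw [LinearMap.lTensor_tmul]
  have plumb : ∀ w : H ⊗[k] H,
      (TensorProduct.assoc k T H H).symm ((1:T) ⊗ₜ[k] w)
      = LinearMap.rTensor H ((TensorProduct.mk k T H) 1) w := by
    intro w
    induction w using TensorProduct.induction_on with
    | zero => simp
    | add u v hu hv => rw [TensorProduct.tmul_add, map_add, hu, hv, map_add]
    | tmul a b => simp
  exact plumb (Coalgebra.comul h)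

end Galois2

section Galois3
variable {k : Type*} [CommRing k] {H : Type*} [Ring H] [HopfAlgebra k H]
  {T : Type*} [Ring T] [Algebra k T]

/-- ν(x ⊗ y) = x₍₀₎y ⊗ x₍₁₎ -/
noncomputable def nuMap (ρ : T →ₐ[k] T ⊗[k] H) : T ⊗[k] T →ₗ[k] T ⊗[k] H :=
  LinearMap.rTensor H (LinearMap.mul' k T)
  ∘ₗ (TensorProduct.assoc k T T H).symm.toLinearMap
  ∘ₗ LinearMap.lTensor T (TensorProduct.comm k H T).toLinearMap
  ∘ₗ (TensorProduct.assoc k T H T).toLinearMap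
  ∘ₗ LinearMap.rTensor T ρ.toLinearMap

variable (ρ : T →ₐ[k] T ⊗[k] H) (β : T ⊗[k] T →ₗ[k] T ⊗[k] H) (γ : H →ₗ[k] T ⊗[k] T)

/-- identity (vi): ν(γ h) = 1 ⊗ S(h) -/
lemma gal_Lvi
    (hcoassoc : ∀ x : T,
      (TensorProduct.map ρ.toLinearMap LinearMap.id) (ρ x)
        = (TensorProduct.assoc k T H H).symm
            ((TensorProduct.map LinearMap.id Coalgebra.comul) (ρ x)))
    (hcounit : ∀ x : T,
      (TensorProduct.rid k T)
        ((TensorProduct.map LinearMap.id Coalgebra.counit) (ρ x)) = x)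
    (hβ : ∀ x y : T, β (x ⊗ₜ[k] y) = (x ⊗ₜ[k] (1 : H)) * ρ y)
    (hβbij : Function.Bijective β)
    (hγ : ∀ h : H, β (γ h) = (1 : T) ⊗ₜ[k] h) (h : H) :
    nuMap ρ (γ h) = (1 : T) ⊗ₜ[k] (HopfAlgebra.antipode (R := k) h) := by
  set g : H →ₗ[k] T ⊗[k] H := (TensorProduct.mk k T H) 1 with hg
  set f : H →ₗ[k] T ⊗[k] H := (nuMap ρ) ∘ₗ γ with hf
  have mulgg : LinearMap.mul' k (T ⊗[k] H) ∘ₗ TensorProduct.map g g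
      = g ∘ₗ LinearMap.mul' k H := by
    apply TensorProduct.ext'
    intro a b
    simp [hg, Algebra.TensorProduct.tmul_mul_tmul]
  have hggS : conv g (g ∘ₗ HopfAlgebra.antipode (R := k)) = cunit := by
    unfold conv
    rw [show TensorProduct.map g (g ∘ₗ HopfAlgebra.antipode (R := k))
        = TensorProduct.map g g ∘ₗ LinearMap.lTensor H (HopfAlgebra.antipode (R := k)) from by
      rw [LinearMap.lTensor, ← TensorProduct.map_comp, LinearMap.comp_id]]
    rw [show (LinearMap.mul' k (T ⊗[k] H)) ∘ₗ
          (TensorProduct.map g g ∘ₗ LinearMap.lTensor H (HopfAlgebra.antipode (R := k)))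
          ∘ₗ Coalgebra.comul
        = g ∘ₗ (LinearMap.mul' k H ∘ₗ
            LinearMap.lTensor H (HopfAlgebra.antipode (R := k)) ∘ₗ Coalgebra.comul) from by
      simp only [← LinearMap.comp_assoc, mulgg]]
    rw [HopfAlgebra.mul_antipode_lTensor_comul]
    apply LinearMap.ext
    intro h'
    simp [hg, cunit, Algebra.TensorProduct.one_def, Algebra.algebraMap_eq_smul_one,
      TensorProduct.tmul_smul]
  have hfg : conv f g = cunit := by
    unfold conv
    have e1 : TensorProduct.map f g
        = TensorProduct.map (nuMap ρ) g ∘ₗ LinearMap.rTensor H γ := by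
      rw [LinearMap.rTensor, hf, ← TensorProduct.map_comp, LinearMap.comp_id]
    have e2 : LinearMap.mul' k (T ⊗[k] H) ∘ₗ TensorProduct.map (nuMap ρ) g
        = LinearMap.mul' k (T ⊗[k] H) ∘ₗ TensorProduct.map ρ.toLinearMap LinearMap.id
          ∘ₗ (TensorProduct.assoc k T T H).toLinearMap := by
      apply TensorProduct.ext_threefold
      intro u v h'
      have sub : ∀ w : T ⊗[k] H,
          (LinearMap.rTensor H (LinearMap.mul' k T)
            ((TensorProduct.assoc k T T H).symm
              ((LinearMap.lTensor T (TensorProduct.comm k H T).toLinearMap)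
                ((TensorProduct.assoc k T H T) ((w ⊗ₜ[k] v) : (T ⊗[k] H) ⊗[k] T)))))
            * ((1:T) ⊗ₜ[k] h')
          = w * (v ⊗ₜ[k] h') := by
        intro w
        induction w using TensorProduct.induction_on with
        | zero => simp
        | add w1 w2 h1 h2 => rw [TensorProduct.add_tmul, map_add, map_add, map_add,
            map_add, add_mul, h1, h2, add_mul]
        | tmul t gg =>
          simp [Algebra.TensorProduct.tmul_mul_tmul]
      simp only [LinearMap.comp_apply, TensorProduct.map_tmul, LinearEquiv.coe_coe,
        TensorProduct.assoc_tmul, LinearMap.id_coe, id_eq, TensorProduct.mk_apply,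
        nuMap, LinearMap.rTensor_tmul, AlgHom.toLinearMap_apply, LinearMap.mul'_apply, hg]
      exact sub (ρ u)
    rw [e1, show LinearMap.mul' k (T ⊗[k] H) ∘ₗ
          (TensorProduct.map (nuMap ρ) g ∘ₗ LinearMap.rTensor H γ) ∘ₗ Coalgebra.comul
        = (LinearMap.mul' k (T ⊗[k] H) ∘ₗ TensorProduct.map (nuMap ρ) g)
          ∘ₗ LinearMap.rTensor H γ ∘ₗ Coalgebra.comul from by
      simp only [LinearMap.comp_assoc]]
    rw [e2]
    apply LinearMap.ext
    intro h'
    simp only [LinearMap.comp_apply, LinearEquiv.coe_coe]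
    rw [← gal_Lii ρ β γ hcoassoc hβ hβbij hγ h', LinearEquiv.apply_symm_apply]
    have step4 : ∀ w : T ⊗[k] T,
        (LinearMap.mul' k (T ⊗[k] H))
          ((TensorProduct.map ρ.toLinearMap LinearMap.id) ((LinearMap.lTensor T ρ.toLinearMap) w))
        = ρ (LinearMap.mul' k T w) := by
      intro w
      induction w using TensorProduct.induction_on with
      | zero => simp
      | add w1 w2 h1 h2 => rw [map_add, map_add, map_add, map_add, h1, h2, ← map_add]
      | tmul u v => simp [← map_mul]
      -- (add case leaves a `map_add` goal)

    rw [step4, gal_mul_gamma ρ β γ hcounit hβ hγ h']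
    simp [cunit, AlgHom.commutes]
  have hmain : f = g ∘ₗ HopfAlgebra.antipode (R := k) := by
    calc f = conv f cunit := (conv_mul_one f).symm
    _ = conv f (conv g (g ∘ₗ HopfAlgebra.antipode (R := k))) := by rw [hggS]
    _ = conv (conv f g) (g ∘ₗ HopfAlgebra.antipode (R := k)) := (conv_assoc _ _ _).symm
    _ = conv cunit (g ∘ₗ HopfAlgebra.antipode (R := k)) := by rw [hfg]
    _ = g ∘ₗ HopfAlgebra.antipode (R := k) := conv_one_mul _
  have := LinearMap.congr_fun hmain h
  simpa [hf, hg] using this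

end Galois3

section Galois4
variable {k : Type*} [CommRing k] {H : Type*} [Ring H] [HopfAlgebra k H]
  {T : Type*} [Ring T] [Algebra k T]

/-- rearr : g ⊗ (u ⊗ v) ↦ (u ⊗ g) ⊗ v -/
noncomputable def rearrMap (k : Type*) [CommRing k] (H T : Type*) [Ring H] [HopfAlgebra k H]
    [Ring T] [Algebra k T] : H ⊗[k] (T ⊗[k] T) →ₗ[k] (T ⊗[k] H) ⊗[k] T :=
  (TensorProduct.assoc k T H T).symm.toLinearMap
  ∘ₗ LinearMap.lTensor T (TensorProduct.comm k T H).toLinearMap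
  ∘ₗ (TensorProduct.assoc k T T H).toLinearMap
  ∘ₗ (TensorProduct.comm k H (T ⊗[k] T)).toLinearMap

/-- sw23 : (t ⊗ g) ⊗ v ↦ (t ⊗ v) ⊗ g (as an equivalence) -/
noncomputable def sw23 (k : Type*) [CommRing k] (H T : Type*) [Ring H] [HopfAlgebra k H]
    [Ring T] [Algebra k T] : (T ⊗[k] H) ⊗[k] T ≃ₗ[k] (T ⊗[k] T) ⊗[k] H :=
  (TensorProduct.assoc k T H T).trans
    ((TensorProduct.congr (LinearEquiv.refl k T) (TensorProduct.comm k H T)).trans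
      (TensorProduct.assoc k T T H).symm)

/-- σ : (s ⊗ g) ⊗ b ↦ (s ⊗ b) ⊗ g -/
noncomputable def sigmaMap (k : Type*) [CommRing k] (H T : Type*) [Ring H] [HopfAlgebra k H]
    [Ring T] [Algebra k T] : (T ⊗[k] H) ⊗[k] H →ₗ[k] (T ⊗[k] H) ⊗[k] H :=
  (TensorProduct.assoc k T H H).symm.toLinearMap
  ∘ₗ LinearMap.lTensor T (TensorProduct.comm k H H).toLinearMap
  ∘ₗ (TensorProduct.assoc k T H H).toLinearMap

/-- R4 : (t ⊗ g) ⊗ (s ⊗ g') ↦ (ts ⊗ g') ⊗ g -/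
noncomputable def r4Map (k : Type*) [CommRing k] (H T : Type*) [Ring H] [HopfAlgebra k H]
    [Ring T] [Algebra k T] : (T ⊗[k] H) ⊗[k] (T ⊗[k] H) →ₗ[k] (T ⊗[k] H) ⊗[k] H :=
  (TensorProduct.assoc k T H H).symm.toLinearMap
  ∘ₗ TensorProduct.map (LinearMap.mul' k T) (TensorProduct.comm k H H).toLinearMap
  ∘ₗ (TensorProduct.tensorTensorTensorComm k T H T H).toLinearMap

variable (ρ : T →ₐ[k] T ⊗[k] H) (β : T ⊗[k] T →ₗ[k] T ⊗[k] H) (γ : H →ₗ[k] T ⊗[k] T)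

/-- identity (iii): (ρ ⊗ id)(γ h) = h₂⁽¹⁾ ⊗ S(h₁) ⊗ h₂⁽²⁾ -/
lemma gal_Liii
    (hcoassoc : ∀ x : T,
      (TensorProduct.map ρ.toLinearMap LinearMap.id) (ρ x)
        = (TensorProduct.assoc k T H H).symm
            ((TensorProduct.map LinearMap.id Coalgebra.comul) (ρ x)))
    (hcounit : ∀ x : T,
      (TensorProduct.rid k T)
        ((TensorProduct.map LinearMap.id Coalgebra.counit) (ρ x)) = x)
    (hβ : ∀ x y : T, β (x ⊗ₜ[k] y) = (x ⊗ₜ[k] (1 : H)) * ρ y)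
    (hβbij : Function.Bijective β)
    (hγ : ∀ h : H, β (γ h) = (1 : T) ⊗ₜ[k] h) (h : H) :
    (LinearMap.rTensor T ρ.toLinearMap) (γ h)
      = rearrMap k H T
          ((TensorProduct.map (HopfAlgebra.antipode (R := k)) γ) (Coalgebra.comul h)) := by
  -- injectivity of rTβ ∘ sw23
  have hinj : Function.Injective
      (fun z : (T ⊗[k] H) ⊗[k] T => LinearMap.rTensor H β ((sw23 k H T) z)) := by
    intro z1 z2 hz
    exact (sw23 k H T).injective (gal_rT_beta_inj β hβbij hz)
  apply hinj
  simp only []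
  -- Step A : LHS chain
  have c1 : ∀ (w : T ⊗[k] H) (y : T),
      LinearMap.rTensor H β ((sw23 k H T) (w ⊗ₜ[k] y))
      = r4Map k H T (w ⊗ₜ[k] (ρ y)) := by
    intro w y
    induction w using TensorProduct.induction_on with
    | zero => simp [sw23, r4Map]
    | add w1 w2 h1 h2 => simp only [map_add, TensorProduct.add_tmul, TensorProduct.tmul_add, add_mul, mul_add, h1, h2]
    | tmul t g =>
      have sub : ∀ v : T ⊗[k] H,
          r4Map k H T ((t ⊗ₜ[k] g) ⊗ₜ[k] v) = ((t ⊗ₜ[k] (1:H)) * v) ⊗ₜ[k] g := by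
        intro v
        induction v using TensorProduct.induction_on with
        | zero => simp [r4Map]
        | add v1 v2 h1 h2 => simp only [map_add, TensorProduct.add_tmul, TensorProduct.tmul_add, add_mul, mul_add, h1, h2]
        | tmul s g' =>
          simp [r4Map, Algebra.TensorProduct.tmul_mul_tmul,
            TensorProduct.tensorTensorTensorComm_tmul]
      rw [sub (ρ y)]
      simp [sw23, hβ]
  have stepA : LinearMap.rTensor H β ((sw23 k H T) ((LinearMap.rTensor T ρ.toLinearMap) (γ h)))
      = r4Map k H T ((TensorProduct.map ρ.toLinearMap ρ.toLinearMap) (γ h)) := by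
    have : (LinearMap.rTensor H β ∘ₗ (sw23 k H T).toLinearMap ∘ₗ LinearMap.rTensor T ρ.toLinearMap)
        = r4Map k H T ∘ₗ TensorProduct.map ρ.toLinearMap ρ.toLinearMap := by
      apply TensorProduct.ext'
      intro x y
      simp only [LinearMap.comp_apply, LinearMap.rTensor_tmul, LinearEquiv.coe_coe,
        TensorProduct.map_tmul, AlgHom.toLinearMap_apply]
      exact c1 (ρ x) y
    exact LinearMap.congr_fun this (γ h)
  rw [stepA]
  -- map ρ ρ (γ h) = rT ρ (assoc (rT γ (Δ h)))
  have stepB : (TensorProduct.map ρ.toLinearMap ρ.toLinearMap) (γ h)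
      = (LinearMap.rTensor (T ⊗[k] H) ρ.toLinearMap)
          ((TensorProduct.assoc k T T H) ((LinearMap.rTensor H γ) (Coalgebra.comul h))) := by
    rw [← gal_Lii ρ β γ hcoassoc hβ hβbij hγ h, LinearEquiv.apply_symm_apply]
    have comp_eq : (LinearMap.rTensor (T ⊗[k] H) ρ.toLinearMap)
        ∘ₗ (LinearMap.lTensor T ρ.toLinearMap)
        = TensorProduct.map ρ.toLinearMap ρ.toLinearMap := by
      rw [LinearMap.rTensor, LinearMap.lTensor, ← TensorProduct.map_comp,
        LinearMap.comp_id, LinearMap.id_comp]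
    exact (LinearMap.congr_fun comp_eq (γ h)).symm
  rw [stepB]
  -- Step E1 : collapse to ν∘γ on the first comul leg
  have e1 : ∀ w : H ⊗[k] H,
      r4Map k H T ((LinearMap.rTensor (T ⊗[k] H) ρ.toLinearMap)
          ((TensorProduct.assoc k T T H) ((LinearMap.rTensor H γ) w)))
      = sigmaMap k H T ((LinearMap.rTensor H (nuMap ρ ∘ₗ γ)) w) := by
    intro w
    induction w using TensorProduct.induction_on with
    | zero => simp
    | add w1 w2 h1 h2 => simp only [map_add, TensorProduct.add_tmul, TensorProduct.tmul_add, add_mul, mul_add, h1, h2]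
    | tmul a b =>
      simp only [LinearMap.rTensor_tmul, LinearMap.comp_apply]
      have sub : ∀ P : T ⊗[k] T,
          r4Map k H T ((LinearMap.rTensor (T ⊗[k] H) ρ.toLinearMap)
              ((TensorProduct.assoc k T T H) (P ⊗ₜ[k] b)))
          = sigmaMap k H T ((nuMap ρ P) ⊗ₜ[k] b) := by
        intro P
        induction P using TensorProduct.induction_on with
        | zero => simp
        | add P1 P2 h1 h2 => simp only [map_add, TensorProduct.add_tmul, TensorProduct.tmul_add, add_mul, mul_add, h1, h2]
        | tmul u v =>
          simp only [TensorProduct.assoc_tmul, LinearMap.rTensor_tmul, AlgHom.toLinearMap_apply,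
            nuMap, LinearMap.comp_apply]
          have subsub : ∀ w' : T ⊗[k] H,
              r4Map k H T (w' ⊗ₜ[k] (v ⊗ₜ[k] b))
              = sigmaMap k H T ((LinearMap.rTensor H (LinearMap.mul' k T)
                  ((TensorProduct.assoc k T T H).symm
                    ((LinearMap.lTensor T (TensorProduct.comm k H T).toLinearMap)
                      ((TensorProduct.assoc k T H T) (w' ⊗ₜ[k] v))))) ⊗ₜ[k] b) := by
            intro w'
            induction w' using TensorProduct.induction_on with
            | zero => simp
            | add x1 x2 h1 h2 => simp only [map_add, TensorProduct.add_tmul, TensorProduct.tmul_add, add_mul, mul_add, h1, h2]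
            | tmul t g =>
              simp [r4Map, sigmaMap, TensorProduct.tensorTensorTensorComm_tmul]
          exact subsub (ρ u)
      exact sub (γ a)
  rw [e1]
  -- use (vi) : ν∘γ = (1 ⊗ ·)∘S
  have hν : (nuMap ρ ∘ₗ γ)
      = ((TensorProduct.mk k T H) 1 ∘ₗ HopfAlgebra.antipode (R := k)) :=
    LinearMap.ext fun h' => by
      simpa using gal_Lvi ρ β γ hcoassoc hcounit hβ hβbij hγ h'
  rw [hν]
  -- Step E2 : compute the RHS chain to the same value
  have e2 : ∀ w : H ⊗[k] H,
      LinearMap.rTensor H β ((sw23 k H T)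
          (rearrMap k H T ((TensorProduct.map (HopfAlgebra.antipode (R := k)) γ) w)))
      = sigmaMap k H T ((LinearMap.rTensor H
          ((TensorProduct.mk k T H) 1 ∘ₗ HopfAlgebra.antipode (R := k))) w) := by
    intro w
    induction w using TensorProduct.induction_on with
    | zero => simp
    | add w1 w2 h1 h2 => simp only [map_add, TensorProduct.add_tmul, TensorProduct.tmul_add, add_mul, mul_add, h1, h2]
    | tmul a b =>
      simp only [TensorProduct.map_tmul, LinearMap.rTensor_tmul, LinearMap.comp_apply,
        TensorProduct.mk_apply]
      have sub : ∀ (a' : H) (Q : T ⊗[k] T),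
          LinearMap.rTensor H β ((sw23 k H T) (rearrMap k H T (a' ⊗ₜ[k] Q)))
          = (β Q) ⊗ₜ[k] a' := by
        intro a' Q
        induction Q using TensorProduct.induction_on with
        | zero => simp
        | add Q1 Q2 h1 h2 => simp only [map_add, TensorProduct.add_tmul, TensorProduct.tmul_add, add_mul, mul_add, h1, h2]
        | tmul u v => simp [rearrMap, sw23]
      rw [sub, hγ]
      simp [sigmaMap]
  exact (e2 (Coalgebra.comul h)).symm
end Galois4

section Galois5
variable {k : Type*} [CommRing k] {H : Type*} [Ring H] [HopfAlgebra k H]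
  {T : Type*} [Ring T] [Algebra k T]

/-- Mtw : (u ⊗ v) ⊗ (w ⊗ z) ↦ wu ⊗ vz -/
noncomputable def mtwMap (k : Type*) [CommRing k] (T : Type*) [Ring T] [Algebra k T] :
    (T ⊗[k] T) ⊗[k] (T ⊗[k] T) →ₗ[k] T ⊗[k] T :=
  TensorProduct.map (LinearMap.mul' k T ∘ₗ (TensorProduct.comm k T T).toLinearMap)
      (LinearMap.mul' k T)
  ∘ₗ (TensorProduct.tensorTensorTensorComm k T T T T).toLinearMap

/-- xd : W ⊗ (w ⊗ z) ↦ (w ⊗ 1) * W * ρ(z) -/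
noncomputable def xdMap (ρ : T →ₐ[k] T ⊗[k] H) :
    (T ⊗[k] H) ⊗[k] (T ⊗[k] T) →ₗ[k] T ⊗[k] H :=
  LinearMap.mul' k (T ⊗[k] H)
  ∘ₗ LinearMap.lTensor (T ⊗[k] H) (LinearMap.mul' k (T ⊗[k] H))
  ∘ₗ (TensorProduct.assoc k (T ⊗[k] H) (T ⊗[k] H) (T ⊗[k] H)).toLinearMap
  ∘ₗ LinearMap.rTensor (T ⊗[k] H) (TensorProduct.comm k (T ⊗[k] H) (T ⊗[k] H)).toLinearMap
  ∘ₗ (TensorProduct.assoc k (T ⊗[k] H) (T ⊗[k] H) (T ⊗[k] H)).symm.toLinearMap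
  ∘ₗ LinearMap.lTensor (T ⊗[k] H)
      (TensorProduct.map
        ((Algebra.TensorProduct.includeLeft : T →ₐ[k] T ⊗[k] H).toLinearMap)
        ρ.toLinearMap)

variable (ρ : T →ₐ[k] T ⊗[k] H) (β : T ⊗[k] T →ₗ[k] T ⊗[k] H) (γ : H →ₗ[k] T ⊗[k] T)

lemma xd_apply (W : T ⊗[k] H) (w z : T) :
    xdMap ρ (W ⊗ₜ[k] (w ⊗ₜ[k] z)) = (w ⊗ₜ[k] (1:H)) * W * ρ z := by
  induction W using TensorProduct.induction_on with
  | zero => simp [xdMap]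
  | add W1 W2 h1 h2 => simp only [map_add, TensorProduct.add_tmul, h1, h2, mul_add, add_mul]
  | tmul t g =>
    simp [xdMap, mul_assoc]
    rw [← mul_assoc, Algebra.TensorProduct.tmul_mul_tmul, one_mul]

/-- identity (iv) : γ(ab) = b⁽¹⁾a⁽¹⁾ ⊗ a⁽²⁾b⁽²⁾ -/
lemma gal_Liv
    (hβ : ∀ x y : T, β (x ⊗ₜ[k] y) = (x ⊗ₜ[k] (1 : H)) * ρ y)
    (hβbij : Function.Bijective β)
    (hγ : ∀ h : H, β (γ h) = (1 : T) ⊗ₜ[k] h) (a b : H) :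
    γ (a * b) = mtwMap k T ((γ a) ⊗ₜ[k] (γ b)) := by
  apply hβbij.injective
  rw [hγ]
  have X1 : β (mtwMap k T ((γ a) ⊗ₜ[k] (γ b))) = xdMap ρ ((β (γ a)) ⊗ₜ[k] (γ b)) := by
    have key : β ∘ₗ mtwMap k T = xdMap ρ ∘ₗ LinearMap.rTensor (T ⊗[k] T) β := by
      apply TensorProduct.ext_fourfold'
      intro u v w z
      simp only [LinearMap.comp_apply, mtwMap, TensorProduct.tensorTensorTensorComm_tmul,
        TensorProduct.map_tmul, LinearEquiv.coe_coe, TensorProduct.comm_tmul,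
        LinearMap.mul'_apply, LinearMap.rTensor_tmul]
      rw [xd_apply, hβ, hβ, map_mul]
      rw [show ((w*u) ⊗ₜ[k] (1:H)) = (w ⊗ₜ[k] (1:H)) * (u ⊗ₜ[k] (1:H)) from by
        simp [Algebra.TensorProduct.tmul_mul_tmul]]
      simp only [mul_assoc]
    exact LinearMap.congr_fun key ((γ a) ⊗ₜ[k] (γ b))
  rw [X1, hγ]
  have X2 : ∀ Q : T ⊗[k] T, xdMap ρ (((1:T) ⊗ₜ[k] a) ⊗ₜ[k] Q) = ((1:T) ⊗ₜ[k] a) * β Q := by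
    intro Q
    induction Q using TensorProduct.induction_on with
    | zero => simp [xdMap]
    | add Q1 Q2 h1 h2 => simp only [map_add, TensorProduct.tmul_add, h1, h2, mul_add]
    | tmul w z =>
      rw [xd_apply, hβ]
      rw [show (w ⊗ₜ[k] (1:H)) * ((1:T) ⊗ₜ[k] a) = ((1:T) ⊗ₜ[k] a) * (w ⊗ₜ[k] (1:H)) from by
        simp [Algebra.TensorProduct.tmul_mul_tmul]]
      rw [mul_assoc]
  rw [X2, hγ]
  simp [Algebra.TensorProduct.tmul_mul_tmul]
end Galois5

section Galois6
variable {k : Type*} [CommRing k] {H : Type*} [Ring H] [HopfAlgebra k H]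
  {T : Type*} [Ring T] [Algebra k T]

/-- q = mult ∘ swap ∘ γ : q(g) = g⁽²⁾ g⁽¹⁾ -/
noncomputable def qMap (γ : H →ₗ[k] T ⊗[k] T) : H →ₗ[k] T :=
  LinearMap.mul' k T ∘ₗ (TensorProduct.comm k T T).toLinearMap ∘ₗ γ

/-- ψ = q ∘ S -/
noncomputable def psiMap (γ : H →ₗ[k] T ⊗[k] T) : H →ₗ[k] T :=
  qMap γ ∘ₗ HopfAlgebra.antipode (R := k)

/-- rearrΩ : (u ⊗ v) ⊗ w ↦ v ⊗ (w ⊗ u) -/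
noncomputable def rearrOmega (k : Type*) [CommRing k] (T : Type*) [Ring T] [Algebra k T] :
    (T ⊗[k] T) ⊗[k] T →ₗ[k] T ⊗[k] (T ⊗[k] T) :=
  LinearMap.lTensor T (TensorProduct.comm k T T).toLinearMap
  ∘ₗ (TensorProduct.assoc k T T T).toLinearMap
  ∘ₗ LinearMap.rTensor T (TensorProduct.comm k T T).toLinearMap

/-- Ω (b ⊗ c) = b⁽²⁾ ψ(c) b⁽¹⁾ -/
noncomputable def omegaMap (γ : H →ₗ[k] T ⊗[k] T) : H ⊗[k] H →ₗ[k] T :=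
  LinearMap.mul' k T ∘ₗ LinearMap.lTensor T (LinearMap.mul' k T) ∘ₗ rearrOmega k T
  ∘ₗ TensorProduct.map γ (psiMap γ)

/-- kMap c : W ⊗ v ↦ ((v c) ⊗ 1) * W -/
noncomputable def kMap (k : Type*) [CommRing k] (H T' : Type*) [Ring H]
    [HopfAlgebra k H] [Ring T'] [Algebra k T'] (c' : T') :
    (T' ⊗[k] H) ⊗[k] T' →ₗ[k] T' ⊗[k] H :=
  LinearMap.mul' k (T' ⊗[k] H)
  ∘ₗ TensorProduct.map
      ((Algebra.TensorProduct.includeLeft : T' →ₐ[k] T' ⊗[k] H).toLinearMap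
        ∘ₗ LinearMap.mulRight k c')
      LinearMap.id
  ∘ₗ (TensorProduct.comm k (T' ⊗[k] H) T').toLinearMap

/-- grand : (g ⊗ (p ⊗ q)) ⊗ c ↦ (q c p) ⊗ g -/
noncomputable def grandMap (k : Type*) [CommRing k] (H T : Type*) [Ring H]
    [HopfAlgebra k H] [Ring T] [Algebra k T] :
    (H ⊗[k] (T ⊗[k] T)) ⊗[k] T →ₗ[k] T ⊗[k] H :=
  (TensorProduct.comm k H T).toLinearMap
  ∘ₗ TensorProduct.map LinearMap.id (LinearMap.mul' k T ∘ₗ LinearMap.lTensor T (LinearMap.mul' k T))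
  ∘ₗ LinearMap.lTensor H (rearrOmega k T)
  ∘ₗ (TensorProduct.assoc k H (T ⊗[k] T) T).toLinearMap

variable (ρ : T →ₐ[k] T ⊗[k] H) (β : T ⊗[k] T →ₗ[k] T ⊗[k] H) (γ : H →ₗ[k] T ⊗[k] T)
  (θ : T →ₗ[k] T)

lemma theta_comp
    (hθ : θ = LinearMap.mul' k T
        ∘ₗ (TensorProduct.comm k T T).toLinearMap
        ∘ₗ LinearMap.lTensor T (LinearMap.mul' k T)
        ∘ₗ (TensorProduct.assoc k T T T).toLinearMap
        ∘ₗ LinearMap.rTensor T (TensorProduct.comm k T T).toLinearMap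
        ∘ₗ (TensorProduct.assoc k T T T).symm.toLinearMap
        ∘ₗ LinearMap.lTensor T (γ ∘ₗ HopfAlgebra.antipode (R := k))
        ∘ₗ ρ.toLinearMap) :
    θ = LinearMap.mul' k T ∘ₗ LinearMap.lTensor T (psiMap γ) ∘ₗ ρ.toLinearMap := by
  rw [hθ]
  apply LinearMap.ext
  intro x
  simp only [LinearMap.comp_apply]
  have key : ∀ w : T ⊗[k] H,
      (LinearMap.mul' k T) ((TensorProduct.comm k T T)
        ((LinearMap.lTensor T (LinearMap.mul' k T))
          ((TensorProduct.assoc k T T T)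
            ((LinearMap.rTensor T (TensorProduct.comm k T T).toLinearMap)
              ((TensorProduct.assoc k T T T).symm
                ((LinearMap.lTensor T (γ ∘ₗ HopfAlgebra.antipode (R := k))) w))))))
      = (LinearMap.mul' k T) ((LinearMap.lTensor T (psiMap γ)) w) := by
    intro w
    induction w using TensorProduct.induction_on with
    | zero => simp
    | add w1 w2 h1 h2 => simp only [map_add, h1, h2]
    | tmul t g =>
      simp only [LinearMap.lTensor_tmul, LinearMap.comp_apply]
      have inner : ∀ Q : T ⊗[k] T,
          (LinearMap.mul' k T) ((TensorProduct.comm k T T)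
            ((LinearMap.lTensor T (LinearMap.mul' k T))
              ((TensorProduct.assoc k T T T)
                ((LinearMap.rTensor T (TensorProduct.comm k T T).toLinearMap)
                  ((TensorProduct.assoc k T T T).symm (t ⊗ₜ[k] Q))))))
          = t * ((LinearMap.mul' k T) ((TensorProduct.comm k T T) Q)) := by
        intro Q
        induction Q using TensorProduct.induction_on with
        | zero => simp
        | add Q1 Q2 h1 h2 => simp only [map_add, TensorProduct.tmul_add, h1, h2, mul_add]
        | tmul u v => simp [mul_assoc]
      rw [inner]
      simp [psiMap, qMap]
  exact key (ρ x)

lemma omega_eq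
    (hβ : ∀ x y : T, β (x ⊗ₜ[k] y) = (x ⊗ₜ[k] (1 : H)) * ρ y)
    (hβbij : Function.Bijective β)
    (hγ : ∀ h : H, β (γ h) = (1 : T) ⊗ₜ[k] h) :
    omegaMap γ = qMap γ ∘ₗ LinearMap.mul' k H ∘ₗ LinearMap.lTensor H
      (HopfAlgebra.antipode (R := k)) := by
  apply TensorProduct.ext'
  intro a b
  have sub : ∀ P Q : T ⊗[k] T,
      (LinearMap.mul' k T) ((LinearMap.lTensor T (LinearMap.mul' k T))
        ((rearrOmega k T) (P ⊗ₜ[k]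
          ((LinearMap.mul' k T) ((TensorProduct.comm k T T) Q)))))
      = (LinearMap.mul' k T) ((TensorProduct.comm k T T) (mtwMap k T (P ⊗ₜ[k] Q))) := by
    intro P Q
    induction P using TensorProduct.induction_on with
    | zero => simp [mtwMap]
    | add P1 P2 h1 h2 => simp only [map_add, TensorProduct.add_tmul, h1, h2]
    | tmul u v =>
      induction Q using TensorProduct.induction_on with
      | zero => simp [mtwMap]
      | add Q1 Q2 h1 h2 => simp only [map_add, TensorProduct.tmul_add, h1, h2]
      | tmul w z =>
        simp [mtwMap, rearrOmega, TensorProduct.tensorTensorTensorComm_tmul, mul_assoc]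
  simp only [LinearMap.comp_apply, TensorProduct.map_tmul, omegaMap,
    LinearMap.lTensor_tmul, LinearMap.mul'_apply]
  have : psiMap γ b = (LinearMap.mul' k T) ((TensorProduct.comm k T T)
      (γ (HopfAlgebra.antipode (R := k) b))) := by simp [psiMap, qMap]
  rw [this, sub (γ a) (γ (HopfAlgebra.antipode (R := k) b)),
    ← gal_Liv ρ β γ hβ hβbij hγ a (HopfAlgebra.antipode (R := k) b)]
  simp [qMap]

lemma omega_comul
    (hβ : ∀ x y : T, β (x ⊗ₜ[k] y) = (x ⊗ₜ[k] (1 : H)) * ρ y)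
    (hβbij : Function.Bijective β)
    (hγ : ∀ h : H, β (γ h) = (1 : T) ⊗ₜ[k] h) (b : H) :
    omegaMap γ (Coalgebra.comul b) = algebraMap k T (Coalgebra.counit b) := by
  rw [omega_eq ρ β γ hβ hβbij hγ]
  simp only [LinearMap.comp_apply]
  rw [show (LinearMap.lTensor H (HopfAlgebra.antipode (R := k))) (Coalgebra.comul b)
    = (HopfAlgebra.antipode (R := k)).lTensor H (Coalgebra.comul b) from rfl]
  rw [HopfAlgebra.mul_antipode_lTensor_comul_apply]
  rw [Algebra.algebraMap_eq_smul_one, map_smul, qMap]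
  simp only [LinearMap.comp_apply, LinearEquiv.coe_coe]
  rw [gal_gamma_one ρ β γ hβ hβbij hγ]
  simp [Algebra.algebraMap_eq_smul_one]
end Galois6

section Galois7
variable {k : Type*} [CommRing k] {H : Type*} [Ring H] [HopfAlgebra k H]
  {T : Type*} [Ring T] [Algebra k T]

variable (ρ : T →ₐ[k] T ⊗[k] H) (β : T ⊗[k] T →ₗ[k] T ⊗[k] H) (γ : H →ₗ[k] T ⊗[k] T)
  (θ : T →ₗ[k] T)

/-- the diamond identity: (id ⊗ θ)(γ h) = τ(γ(S h)) -/
lemma gal_diamond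
    (hcoassoc : ∀ x : T,
      (TensorProduct.map ρ.toLinearMap LinearMap.id) (ρ x)
        = (TensorProduct.assoc k T H H).symm
            ((TensorProduct.map LinearMap.id Coalgebra.comul) (ρ x)))
    (hcounit : ∀ x : T,
      (TensorProduct.rid k T)
        ((TensorProduct.map LinearMap.id Coalgebra.counit) (ρ x)) = x)
    (hβ : ∀ x y : T, β (x ⊗ₜ[k] y) = (x ⊗ₜ[k] (1 : H)) * ρ y)
    (hβbij : Function.Bijective β)
    (hγ : ∀ h : H, β (γ h) = (1 : T) ⊗ₜ[k] h)
    (hθ : θ = LinearMap.mul' k T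
        ∘ₗ (TensorProduct.comm k T T).toLinearMap
        ∘ₗ LinearMap.lTensor T (LinearMap.mul' k T)
        ∘ₗ (TensorProduct.assoc k T T T).toLinearMap
        ∘ₗ LinearMap.rTensor T (TensorProduct.comm k T T).toLinearMap
        ∘ₗ (TensorProduct.assoc k T T T).symm.toLinearMap
        ∘ₗ LinearMap.lTensor T (γ ∘ₗ HopfAlgebra.antipode (R := k))
        ∘ₗ ρ.toLinearMap)
    (h : H) :
    LinearMap.lTensor T θ (γ h)
      = (TensorProduct.comm k T T) (γ (HopfAlgebra.antipode (R := k) h)) := by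
  have commcomm : ∀ w : T ⊗[k] T, (TensorProduct.comm k T T) ((TensorProduct.comm k T T) w) = w := by
    intro w
    induction w using TensorProduct.induction_on with
    | zero => simp
    | add a b ha hb => simp only [map_add, ha, hb]
    | tmul a b => simp
  have hinj : Function.Injective (fun w : T ⊗[k] T => β ((TensorProduct.comm k T T) w)) := by
    intro w1 w2 hw
    have := hβbij.injective hw
    have h2 := congrArg (TensorProduct.comm k T T) this
    simpa [commcomm] using h2
  apply hinj
  simp only []
  rw [commcomm, hγ]
  -- now show β (comm (lTθ (γ h))) = 1 ⊗ S h
  have theta_c := theta_comp ρ γ θ hθ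
  have lt_theta : LinearMap.lTensor T θ (γ h)
      = LinearMap.lTensor T (LinearMap.mul' k T)
          ((LinearMap.lTensor T (LinearMap.lTensor T (psiMap γ)))
            ((LinearMap.lTensor T ρ.toLinearMap) (γ h))) := by
    rw [theta_c, LinearMap.lTensor_comp, LinearMap.lTensor_comp]
    rfl
  rw [lt_theta]
  have lii : (LinearMap.lTensor T ρ.toLinearMap) (γ h)
      = (TensorProduct.assoc k T T H) ((LinearMap.rTensor H γ) (Coalgebra.comul h)) := by
    rw [← gal_Lii ρ β γ hcoassoc hβ hβbij hγ h, LinearEquiv.apply_symm_apply]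
  rw [lii]
  -- big pointwise claim
  have bigW : ∀ w : H ⊗[k] H,
      β ((TensorProduct.comm k T T)
        ((LinearMap.lTensor T (LinearMap.mul' k T))
          ((LinearMap.lTensor T (LinearMap.lTensor T (psiMap γ)))
            ((TensorProduct.assoc k T T H) ((LinearMap.rTensor H γ) w)))))
      = grandMap k H T
          ((TensorProduct.map (TensorProduct.map (HopfAlgebra.antipode (R := k)) γ) (psiMap γ))
            ((LinearMap.rTensor H (Coalgebra.comul (R := k))) w)) := by
    intro w
    induction w using TensorProduct.induction_on with
    | zero => simp
    | add w1 w2 h1 h2 => simp only [map_add, h1, h2]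
    | tmul a b =>
      simp only [LinearMap.rTensor_tmul, TensorProduct.map_tmul]
      have d2 : ∀ (P : T ⊗[k] T) (b : H),
          (LinearMap.lTensor T (LinearMap.mul' k T))
            ((LinearMap.lTensor T (LinearMap.lTensor T (psiMap γ)))
              ((TensorProduct.assoc k T T H) (P ⊗ₜ[k] b)))
          = (LinearMap.lTensor T (LinearMap.mulRight k (psiMap γ b))) P := by
        intro P b
        induction P using TensorProduct.induction_on with
        | zero => simp
        | add P1 P2 h1 h2 => simp only [map_add, TensorProduct.add_tmul, h1, h2]
        | tmul u v => simp
      rw [d2]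
      have d3 : ∀ (c : T) (P : T ⊗[k] T),
          β ((TensorProduct.comm k T T) ((LinearMap.lTensor T (LinearMap.mulRight k c)) P))
          = kMap k H T c ((LinearMap.rTensor T ρ.toLinearMap) P) := by
        intro c P
        induction P using TensorProduct.induction_on with
        | zero => simp [kMap]
        | add P1 P2 h1 h2 => simp only [map_add, h1, h2]
        | tmul u v =>
          simp [kMap, hβ, Algebra.TensorProduct.tmul_mul_tmul]
      rw [d3]
      rw [gal_Liii ρ β γ hcoassoc hcounit hβ hβbij hγ a]
      have d4 : ∀ (c : T) (W : H ⊗[k] (T ⊗[k] T)),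
          kMap k H T c ((rearrMap k H T) W) = grandMap k H T (W ⊗ₜ[k] c) := by
        intro c W
        induction W using TensorProduct.induction_on with
        | zero => simp [kMap, rearrMap, grandMap]
        | add W1 W2 h1 h2 => simp only [map_add, TensorProduct.add_tmul, h1, h2]
        | tmul g Q =>
          induction Q using TensorProduct.induction_on with
          | zero => simp [kMap, rearrMap, grandMap]
          | add Q1 Q2 h1 h2 => simp only [map_add, TensorProduct.add_tmul,
              TensorProduct.tmul_add, h1, h2]
          | tmul p q =>
            simp [kMap, rearrMap, grandMap, rearrOmega,
              Algebra.TensorProduct.tmul_mul_tmul, mul_assoc]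
      rw [d4]
  rw [bigW]
  -- coassoc
  rw [show (LinearMap.rTensor H (Coalgebra.comul (R := k))) (Coalgebra.comul h)
      = (Coalgebra.comul (R := k)).rTensor H (Coalgebra.comul h) from rfl,
    ← Coalgebra.coassoc_symm_apply h]
  -- final collapse
  have d6 : ∀ w : H ⊗[k] (H ⊗[k] H),
      grandMap k H T
        ((TensorProduct.map (TensorProduct.map (HopfAlgebra.antipode (R := k)) γ) (psiMap γ))
          ((TensorProduct.assoc k H H H).symm w))
      = (TensorProduct.comm k H T)
          ((TensorProduct.map (HopfAlgebra.antipode (R := k)) (omegaMap γ)) w) := by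
    intro w
    induction w using TensorProduct.induction_on with
    | zero => simp
    | add w1 w2 h1 h2 => simp only [map_add, h1, h2]
    | tmul a y =>
      induction y using TensorProduct.induction_on with
      | zero => simp
      | add y1 y2 h1 h2 => simp only [map_add, TensorProduct.tmul_add, h1, h2]
      | tmul b c =>
        simp only [TensorProduct.assoc_symm_tmul, TensorProduct.map_tmul, omegaMap,
          LinearMap.comp_apply]
        have pure_g : ∀ (g : H) (Q : T ⊗[k] T) (c' : T),
            grandMap k H T ((g ⊗ₜ[k] Q) ⊗ₜ[k] c')
            = ((LinearMap.mul' k T) ((LinearMap.lTensor T (LinearMap.mul' k T))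
                ((rearrOmega k T) (Q ⊗ₜ[k] c')))) ⊗ₜ[k] g := by
          intro g Q c'
          induction Q using TensorProduct.induction_on with
          | zero => simp [grandMap]
          | add Q1 Q2 h1 h2 => simp only [map_add, TensorProduct.add_tmul,
              TensorProduct.tmul_add, h1, h2, TensorProduct.add_tmul]
          | tmul p q => simp [grandMap, rearrOmega]
        rw [pure_g]
        simp
  rw [d6]
  -- map S Ω ∘ lTensor Δ = map S (Ω ∘ Δ), then Ω∘Δ = η∘ε
  have final : (TensorProduct.map (HopfAlgebra.antipode (R := k)) (omegaMap γ))
      ((LinearMap.lTensor H (Coalgebra.comul (R := k))) (Coalgebra.comul h))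
      = (HopfAlgebra.antipode (R := k) h) ⊗ₜ[k] (1 : T) := by
    have comp1 : (TensorProduct.map (HopfAlgebra.antipode (R := k)) (omegaMap γ))
        ∘ₗ (LinearMap.lTensor H (Coalgebra.comul (R := k)))
        = TensorProduct.map (HopfAlgebra.antipode (R := k))
            (omegaMap γ ∘ₗ Coalgebra.comul) := by
      rw [LinearMap.lTensor, ← TensorProduct.map_comp, LinearMap.comp_id]
    rw [← LinearMap.comp_apply, comp1]
    have comp2 : omegaMap γ ∘ₗ (Coalgebra.comul (R := k))
        = (Algebra.linearMap k T) ∘ₗ Coalgebra.counit :=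
      LinearMap.ext fun b => by
        simpa using omega_comul ρ β γ hβ hβbij hγ b
    rw [comp2]
    rw [show TensorProduct.map (HopfAlgebra.antipode (R := k))
          ((Algebra.linearMap k T) ∘ₗ (Coalgebra.counit (R := k) (A := H)))
        = TensorProduct.map (HopfAlgebra.antipode (R := k)) (Algebra.linearMap k T)
          ∘ₗ LinearMap.lTensor H (Coalgebra.counit (R := k) (A := H)) from by
      rw [LinearMap.lTensor, ← TensorProduct.map_comp, LinearMap.comp_id]]
    rw [LinearMap.comp_apply,
      show (LinearMap.lTensor H (Coalgebra.counit (R := k) (A := H))) (Coalgebra.comul h)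
        = (Coalgebra.counit (R := k)).lTensor H (Coalgebra.comul h) from rfl,
      Coalgebra.lTensor_counit_comul]
    simp
  rw [final]
  simp
end Galois7


/-- For a faithfully flat `H`-Galois object `T`, the maps `μ` and
`θ` satisfy the fourth torsor axiom
`(id ⊗ id ⊗ θ ⊗ id ⊗ id)∘(μ ⊗ id ⊗ id)∘μ = (id ⊗ μᵒᵖ ⊗ id)∘μ`,
where `μᵒᵖ = τ₍₁₃₎∘μ`. -/
theorem stmt_8
    {k : Type*} [CommRing k] {H : Type*} [Ring H] [HopfAlgebra k H]
    {T : Type*} [Ring T] [Algebra k T]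
    -- `ρ` is an algebra map making `T` a right `H`-comodule algebra:
    (ρ : T →ₐ[k] T ⊗[k] H)
    (hcoassoc : ∀ x : T,
      (TensorProduct.map ρ.toLinearMap LinearMap.id) (ρ x)
        = (TensorProduct.assoc k T H H).symm
            ((TensorProduct.map LinearMap.id Coalgebra.comul) (ρ x)))
    (hcounit : ∀ x : T,
      (TensorProduct.rid k T)
        ((TensorProduct.map LinearMap.id Coalgebra.counit) (ρ x)) = x)
    -- the coinvariants are exactly `k·1`:
    (hcoinv : {t : T | ρ t = t ⊗ₜ[k] (1 : H)} = Set.range (algebraMap k T))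
    -- `T` is faithfully flat over `k`:
    (hflat : Module.FaithfullyFlat k T)
    -- the canonical (Galois) map `β(x ⊗ y) = x·y₍₀₎ ⊗ y₍₁₎`, assumed bijective:
    (β : T ⊗[k] T →ₗ[k] T ⊗[k] H)
    (hβ : ∀ x y : T, β (x ⊗ₜ[k] y) = (x ⊗ₜ[k] (1 : H)) * ρ y)
    (hβbij : Function.Bijective β)
    -- `γ(h) = β⁻¹(1 ⊗ h) = h⁽¹⁾ ⊗ h⁽²⁾`:
    (γ : H →ₗ[k] T ⊗[k] T)
    (hγ : ∀ h : H, β (γ h) = (1 : T) ⊗ₜ[k] h)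
    -- `μ(x) = x₍₀₎ ⊗ x₍₁₎⁽¹⁾ ⊗ x₍₁₎⁽²⁾`:
    (μ : T →ₗ[k] T ⊗[k] (T ⊗[k] T))
    (hμ : μ = (LinearMap.lTensor T γ) ∘ₗ ρ.toLinearMap)
    -- `θ(x) = (x₍₀₎·S(x₍₁₎)⁽²⁾)·S(x₍₁₎)⁽¹⁾`:
    (θ : T →ₗ[k] T)
    (hθ : θ = LinearMap.mul' k T
        ∘ₗ (TensorProduct.comm k T T).toLinearMap
        ∘ₗ LinearMap.lTensor T (LinearMap.mul' k T)
        ∘ₗ (TensorProduct.assoc k T T T).toLinearMap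
        ∘ₗ LinearMap.rTensor T (TensorProduct.comm k T T).toLinearMap
        ∘ₗ (TensorProduct.assoc k T T T).symm.toLinearMap
        ∘ₗ LinearMap.lTensor T (γ ∘ₗ HopfAlgebra.antipode (R := k))
        ∘ₗ ρ.toLinearMap)
    -- `μᵒᵖ = τ₍₁₃₎ ∘ μ`, where `τ₍₁₃₎` exchanges the outer tensor factors:
    (μop : T →ₗ[k] T ⊗[k] (T ⊗[k] T))
    (hμop : μop = LinearMap.lTensor T (TensorProduct.comm k T T).toLinearMap
        ∘ₗ (TensorProduct.comm k (T ⊗[k] T) T).toLinearMap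
        ∘ₗ (TensorProduct.assoc k T T T).symm.toLinearMap
        ∘ₗ μ) :
    ∀ x : T,
      (LinearMap.lTensor T (LinearMap.lTensor T (LinearMap.rTensor (T ⊗[k] T) θ)))
        ((LinearMap.lTensor T (TensorProduct.assoc k T T (T ⊗[k] T)).toLinearMap)
          ((TensorProduct.assoc k T (T ⊗[k] T) (T ⊗[k] T))
            ((LinearMap.rTensor (T ⊗[k] T) μ) (μ x))))
      = (LinearMap.lTensor T
          (LinearMap.lTensor T (TensorProduct.assoc k T T T).toLinearMap
            ∘ₗ (TensorProduct.assoc k T (T ⊗[k] T) T).toLinearMap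
            ∘ₗ LinearMap.rTensor T μop)) (μ x) := by

  intro x
  set S : H →ₗ[k] H := HopfAlgebra.antipode (R := k) with hS
  set Lam1 : H ⊗[k] H →ₗ[k] T ⊗[k] (T ⊗[k] (T ⊗[k] T)) :=
    (TensorProduct.assoc k T T (T ⊗[k] T)).toLinearMap
      ∘ₗ TensorProduct.map ((LinearMap.lTensor T θ) ∘ₗ γ) γ with hLam1
  set LamR : H ⊗[k] H →ₗ[k] T ⊗[k] (T ⊗[k] (T ⊗[k] T)) :=
    (TensorProduct.assoc k T T (T ⊗[k] T)).toLinearMap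
      ∘ₗ TensorProduct.map ((TensorProduct.comm k T T).toLinearMap ∘ₗ γ ∘ₗ S) γ with hLamR
  -- ΛL1 = ΛR via the diamond identity
  have lam_eq : Lam1 = LamR := by
    rw [hLam1, hLamR]
    congr 2
    apply LinearMap.ext
    intro h'
    simp only [LinearMap.comp_apply, LinearEquiv.coe_coe, hS]
    exact gal_diamond ρ β γ θ hcoassoc hcounit hβ hβbij hγ hθ h'
  -- LHS reduction -----------------------------------------------------------
  have hmux : μ x = LinearMap.lTensor T γ (ρ x) := by rw [hμ]; rfl
  have step1 : (LinearMap.rTensor (T ⊗[k] T) μ) (μ x)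
      = (LinearMap.rTensor (T ⊗[k] T) (LinearMap.lTensor T γ))
          ((LinearMap.lTensor (T ⊗[k] H) γ)
            ((TensorProduct.assoc k T H H).symm
              ((LinearMap.lTensor T (Coalgebra.comul (R := k))) (ρ x)))) := by
    rw [hmux]
    have ca : LinearMap.rTensor (T ⊗[k] T) μ ∘ₗ LinearMap.lTensor T γ
        = LinearMap.rTensor (T ⊗[k] T) (LinearMap.lTensor T γ)
          ∘ₗ LinearMap.lTensor (T ⊗[k] H) γ ∘ₗ LinearMap.rTensor H ρ.toLinearMap := by
      apply TensorProduct.ext'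
      intro x' h'
      simp [hμ]
    have := LinearMap.congr_fun ca (ρ x)
    simp only [LinearMap.comp_apply] at this
    rw [this]
    congr 1
    congr 1
    have hc := hcoassoc x
    rw [show TensorProduct.map ρ.toLinearMap LinearMap.id = LinearMap.rTensor H ρ.toLinearMap
      from rfl, show TensorProduct.map LinearMap.id (Coalgebra.comul (R := k))
      = LinearMap.lTensor T (Coalgebra.comul (R := k)) from rfl] at hc
    exact hc
  rw [step1]
  have PM : ∀ w : T ⊗[k] (H ⊗[k] H),
      (LinearMap.lTensor T (LinearMap.lTensor T (LinearMap.rTensor (T ⊗[k] T) θ)))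
        ((LinearMap.lTensor T (TensorProduct.assoc k T T (T ⊗[k] T)).toLinearMap)
          ((TensorProduct.assoc k T (T ⊗[k] T) (T ⊗[k] T))
            ((LinearMap.rTensor (T ⊗[k] T) (LinearMap.lTensor T γ))
              ((LinearMap.lTensor (T ⊗[k] H) γ)
                ((TensorProduct.assoc k T H H).symm w)))))
      = LinearMap.lTensor T Lam1 w := by
    intro w
    induction w using TensorProduct.induction_on with
    | zero => simp
    | add w1 w2 h1 h2 => simp only [map_add, h1, h2]
    | tmul x' y' =>
      induction y' using TensorProduct.induction_on with
      | zero => simp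
      | add y1 y2 h1 h2 => simp only [map_add, TensorProduct.tmul_add, h1, h2]
      | tmul a b =>
        simp only [TensorProduct.assoc_symm_tmul, LinearMap.lTensor_tmul,
          LinearMap.rTensor_tmul]
        have SC : ∀ (P Q : T ⊗[k] T),
            (LinearMap.lTensor T (LinearMap.lTensor T (LinearMap.rTensor (T ⊗[k] T) θ)))
              ((LinearMap.lTensor T (TensorProduct.assoc k T T (T ⊗[k] T)).toLinearMap)
                ((TensorProduct.assoc k T (T ⊗[k] T) (T ⊗[k] T)) ((x' ⊗ₜ[k] P) ⊗ₜ[k] Q)))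
            = x' ⊗ₜ[k] ((TensorProduct.assoc k T T (T ⊗[k] T))
                ((LinearMap.lTensor T θ P) ⊗ₜ[k] Q)) := by
          intro P Q
          induction P using TensorProduct.induction_on with
          | zero => simp
          | add P1 P2 h1 h2 => simp only [map_add, TensorProduct.add_tmul,
              TensorProduct.tmul_add, h1, h2]
          | tmul u v =>
            induction Q using TensorProduct.induction_on with
            | zero => simp
            | add Q1 Q2 h1 h2 => simp only [map_add, TensorProduct.add_tmul,
                TensorProduct.tmul_add, h1, h2]
            | tmul w1 w2 => simp
        rw [SC (γ a) (γ b)]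
        simp [hLam1]
  rw [PM]
  -- RHS reduction -----------------------------------------------------------
  rw [hmux]
  rw [show (LinearMap.lTensor T
        (LinearMap.lTensor T (TensorProduct.assoc k T T T).toLinearMap
          ∘ₗ (TensorProduct.assoc k T (T ⊗[k] T) T).toLinearMap
          ∘ₗ LinearMap.rTensor T μop)) ((LinearMap.lTensor T γ) (ρ x))
      = LinearMap.lTensor T
          ((LinearMap.lTensor T (TensorProduct.assoc k T T T).toLinearMap
            ∘ₗ (TensorProduct.assoc k T (T ⊗[k] T) T).toLinearMap
            ∘ₗ LinearMap.rTensor T μop) ∘ₗ γ) (ρ x) from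
    (LinearMap.congr_fun (LinearMap.lTensor_comp T _ γ) (ρ x)).symm]
  -- F ∘ γ = ΛR ∘ Δ
  have CR : (LinearMap.lTensor T (TensorProduct.assoc k T T T).toLinearMap
        ∘ₗ (TensorProduct.assoc k T (T ⊗[k] T) T).toLinearMap
        ∘ₗ LinearMap.rTensor T μop) ∘ₗ γ
      = LamR ∘ₗ Coalgebra.comul := by
    apply LinearMap.ext
    intro h'
    set tau : T ⊗[k] (T ⊗[k] T) →ₗ[k] T ⊗[k] (T ⊗[k] T) :=
      LinearMap.lTensor T (TensorProduct.comm k T T).toLinearMap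
        ∘ₗ (TensorProduct.comm k (T ⊗[k] T) T).toLinearMap
        ∘ₗ (TensorProduct.assoc k T T T).symm.toLinearMap with htau
    have hμop2 : μop = (tau ∘ₗ LinearMap.lTensor T γ) ∘ₗ ρ.toLinearMap := by
      rw [hμop, hμ, htau]
      simp only [LinearMap.comp_assoc]
    have rsplit : LinearMap.rTensor T μop (γ h')
        = LinearMap.rTensor T (tau ∘ₗ LinearMap.lTensor T γ)
            ((LinearMap.rTensor T ρ.toLinearMap) (γ h')) := by
      rw [hμop2, LinearMap.rTensor_comp]
      rfl
    simp only [LinearMap.comp_apply, LinearEquiv.coe_coe]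
    rw [rsplit, gal_Liii ρ β γ hcoassoc hcounit hβ hβbij hγ h']
    have PM2 : ∀ w : H ⊗[k] (T ⊗[k] T),
        (LinearMap.lTensor T (TensorProduct.assoc k T T T).toLinearMap)
          ((TensorProduct.assoc k T (T ⊗[k] T) T)
            ((LinearMap.rTensor T (tau ∘ₗ LinearMap.lTensor T γ)) ((rearrMap k H T) w)))
        = (TensorProduct.assoc k T T (T ⊗[k] T))
            ((LinearMap.rTensor (T ⊗[k] T)
              ((TensorProduct.comm k T T).toLinearMap ∘ₗ γ)) w) := by
      intro w
      induction w using TensorProduct.induction_on with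
      | zero => simp
      | add w1 w2 h1 h2 => simp only [map_add, h1, h2]
      | tmul g Q2 =>
        induction Q2 using TensorProduct.induction_on with
        | zero => simp [rearrMap]
        | add y1 y2 h1 h2 => simp only [map_add, TensorProduct.tmul_add, h1, h2]
        | tmul u v =>
          simp only [rearrMap, LinearMap.comp_apply, LinearEquiv.coe_coe,
            TensorProduct.comm_tmul, TensorProduct.assoc_tmul,
            TensorProduct.assoc_symm_tmul, LinearMap.lTensor_tmul,
            LinearMap.rTensor_tmul]
          have sub : ∀ Q : T ⊗[k] T,
              (LinearMap.lTensor T (TensorProduct.assoc k T T T).toLinearMap)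
                ((TensorProduct.assoc k T (T ⊗[k] T) T) ((tau (u ⊗ₜ[k] Q)) ⊗ₜ[k] v))
              = (TensorProduct.assoc k T T (T ⊗[k] T))
                  (((TensorProduct.comm k T T) Q) ⊗ₜ[k] (u ⊗ₜ[k] v)) := by
            intro Q
            induction Q using TensorProduct.induction_on with
            | zero => simp [htau]
            | add Q1 Q2 h1 h2 => simp only [map_add, TensorProduct.tmul_add,
                TensorProduct.add_tmul, h1, h2]
            | tmul p q => simp [htau]
          exact sub (γ g)
    rw [PM2]
    rw [hLamR]
    have msplit : (LinearMap.rTensor (T ⊗[k] T)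
          ((TensorProduct.comm k T T).toLinearMap ∘ₗ γ))
          ((TensorProduct.map S γ) (Coalgebra.comul h'))
        = (TensorProduct.map ((TensorProduct.comm k T T).toLinearMap ∘ₗ γ ∘ₗ S) γ)
            (Coalgebra.comul h') := by
      have : (LinearMap.rTensor (T ⊗[k] T) ((TensorProduct.comm k T T).toLinearMap ∘ₗ γ))
          ∘ₗ (TensorProduct.map S γ)
          = TensorProduct.map ((TensorProduct.comm k T T).toLinearMap ∘ₗ γ ∘ₗ S) γ := by
        apply TensorProduct.ext'
        intro a b
        simp
      exact LinearMap.congr_fun this (Coalgebra.comul h')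
    rw [msplit]
    rfl
  rw [CR]
  -- combine
  rw [show (LinearMap.lTensor T (LamR ∘ₗ Coalgebra.comul)) (ρ x)
      = (LinearMap.lTensor T LamR) ((LinearMap.lTensor T (Coalgebra.comul (R := k))) (ρ x))
      from LinearMap.congr_fun (LinearMap.lTensor_comp T LamR Coalgebra.comul) (ρ x)]
  rw [← lam_eq]
end
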